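/- arXiv:1605.08545 — 5 statements merged into one kernel-verified Lean document; each statement's English description precedes it below -/
import Mathlib

section
/- For every regular multisegment m = Δ_1 + ⋯ + Δ_k, the complexity equals the number of ≺-related pairs: c(m) = #{(i,j) : 1 ≤ i, j ≤ k, Δ_i ≺ Δ_j}. -/
/-! ## Segments and multisegments -/

structure Segment where
  a : ℤ
  b : ℤ
  nonempty : a ≤ b

namespace Segment

/-- `Δ ≺ Δ'`. -/
def prec (Δ Δ' : Segment) : Prop :=
  Δ.a < Δ'.a ∧ Δ'.a ≤ Δ.b + 1 ∧ Δ.b < Δ'.b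

def linked (Δ Δ' : Segment) : Prop := prec Δ Δ' ∨ prec Δ' Δ

/-- `←Δ = [a-1, b-1]`. -/
def shiftl (Δ : Segment) : Segment :=
  ⟨Δ.a - 1, Δ.b - 1, by have := Δ.nonempty; omega⟩

end Segment

abbrev Multisegment := Multiset Segment

/-- `Step m n` means `m ⊢ n`: `m` is obtained from `n` by replacing a pair of linked
segments of `n` by its offspring. -/
def Step (m n : Multisegment) : Prop :=
  ∃ (Δ Δ' : Segment) (r : Multisegment),
    Segment.prec Δ Δ' ∧ n = Δ ::ₘ Δ' ::ₘ r ∧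
    ((Δ'.a ≤ Δ.b ∧ ∃ E F : Segment,
        E.a = Δ.a ∧ E.b = Δ'.b ∧ F.a = Δ'.a ∧ F.b = Δ.b ∧ m = E ::ₘ F ::ₘ r) ∨
     (Δ'.a = Δ.b + 1 ∧ ∃ E : Segment, E.a = Δ.a ∧ E.b = Δ'.b ∧ m = E ::ₘ r))

/-- `Obt m n` means `m ⊨ n`: reflexive-transitive closure of `⊢`. -/
def Obt : Multisegment → Multisegment → Prop := Relation.ReflTransGen Step

def PairwiseUnlinked (m : Multisegment) : Prop :=
  ∀ (Δ Δ' : Segment) (r : Multisegment), m = Δ ::ₘ Δ' ::ₘ r → ¬ Segment.linked Δ Δ'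

/-- `StepN l m n` : there is a chain of `l` steps `m = m_l ⊢ m_{l-1} ⊢ ⋯ ⊢ m_1 ⊢ n`. -/
def StepN : ℕ → Multisegment → Multisegment → Prop
  | 0, m, n => m = n
  | l + 1, m, n => ∃ p, Step m p ∧ StepN l p n

/-- The complexity `c(m)`: the maximal `l` for which there is a chain of `l` steps ending at `m`. -/
noncomputable def complexity (m : Multisegment) : ℕ :=
  sSup {l : ℕ | ∃ m', StepN l m' m}

/-- Almost pairwise unlinked. -/
def APU (m : Multisegment) : Prop :=
  ∃ m', PairwiseUnlinked m' ∧ Step m' m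

/-- The depth `d(m)`: the number of APU multisegments `n` with `n ⊨ m`. -/
noncomputable def depth (m : Multisegment) : ℕ :=
  {n : Multisegment | APU n ∧ Obt n m}.ncard

def Regular (m : Multisegment) : Prop :=
  (m.map Segment.a).Nodup ∧ (m.map Segment.b).Nodup

def IsBalanced (m : Multisegment) : Prop :=
  Regular m ∧ depth m = complexity m

/-! ## Enumerated multisegments and the (GLS) condition -/

/-- The multisegment `Δ_0 + ⋯ + Δ_{k-1}` attached to an enumeration `Δ : ℕ → Segment`. -/
def msOf (k : ℕ) (Δ : ℕ → Segment) : Multisegment :=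
  ↑((List.range k).map Δ)

def Xset (k : ℕ) (Δ : ℕ → Segment) : Set (ℕ × ℕ) :=
  {p | p.1 < k ∧ p.2 < k ∧ (Δ p.1).prec (Δ p.2)}

def Xtil (k : ℕ) (Δ : ℕ → Segment) : Set (ℕ × ℕ) :=
  {p | p.1 < k ∧ p.2 < k ∧ ((Δ p.1).shiftl).prec (Δ p.2)}

open Classical in
/-- The vector `x_{i,j}(λ) ∈ ℂ^{X̃_m}` (viewed inside the functions `ℕ × ℕ → ℂ`). -/
noncomputable def glsVec (k : ℕ) (Δ : ℕ → Segment) (lam : ℕ → ℕ → ℂ) (i j : ℕ) :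
    ℕ × ℕ → ℂ := fun p =>
  (if p.1 = i ∧ (p.2, j) ∈ Xset k Δ ∧ (i, p.2) ∈ Xtil k Δ then lam p.2 j else 0) -
  (if p.2 = j ∧ (p.1, j) ∈ Xtil k Δ ∧ (i, p.1) ∈ Xset k Δ then lam i p.1 else 0)

/-- Condition (GLS). -/
def GLS (k : ℕ) (Δ : ℕ → Segment) : Prop :=
  ∃ lam : ℕ → ℕ → ℂ,
    LinearIndependent ℂ (fun p : Xset k Δ => glsVec k Δ lam p.1.1 p.1.2)

/-- The relation `⤳` between `X_m` and `X̃_m`. -/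
def leadsTo (Δ : ℕ → Segment) (x y : ℕ × ℕ) : Prop :=
  (x.1 = y.1 ∧ (Δ y.2).prec (Δ x.2)) ∨ (x.2 = y.2 ∧ (Δ x.1).prec (Δ y.1))

/-- `N_{i,j} = {y ∈ X̃_m : (i,j) ⤳ y}`. -/
def Nset (k : ℕ) (Δ : ℕ → Segment) (x : ℕ × ℕ) : Set (ℕ × ℕ) :=
  {y ∈ Xtil k Δ | leadsTo Δ x y}

/-- The labelled relation `x ⤳^r y`. -/
def LabRel (k : ℕ) (Δ : ℕ → Segment) (x r y : ℕ × ℕ) : Prop :=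
  (x.1 = y.1 ∧ r = (y.2, x.2) ∧ x ∈ Xset k Δ ∧ r ∈ Xset k Δ ∧ y ∈ Xtil k Δ) ∨
  (x.2 = y.2 ∧ r = (x.1, y.1) ∧ x ∈ Xset k Δ ∧ r ∈ Xset k Δ ∧ y ∈ Xtil k Δ)

/-- Multisegments of type 4231. -/
def Type4231 (m : Multisegment) : Prop :=
  ∃ (k : ℕ) (Δ : ℕ → Segment), 4 ≤ k ∧ m = msOf k Δ ∧ Regular m ∧
    (∀ i j, i < j → j < k → (Δ j).b < (Δ i).b) ∧
    (∀ i, 2 ≤ i → i + 1 < k → (Δ (i + 1)).prec (Δ i)) ∧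
    (Δ 2).prec (Δ 0) ∧
    (Δ (k - 1)).a < (Δ 1).a ∧ (Δ 1).a < (Δ (k - 2)).a

/-- Multisegments of type 3412. -/
def Type3412 (m : Multisegment) : Prop :=
  ∃ (k : ℕ) (Δ : ℕ → Segment), 4 ≤ k ∧ m = msOf k Δ ∧ Regular m ∧
    (∀ i j, i < j → j < k → (Δ j).b < (Δ i).b) ∧
    (∀ i, 3 ≤ i → i + 1 < k → (Δ (i + 1)).prec (Δ i)) ∧
    (Δ 3).prec (Δ 1) ∧
    (Δ 2).a < (Δ (k - 1)).a ∧ (Δ (k - 1)).a < (Δ 0).a ∧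
    (Δ 0).a < (Δ (if k = 4 then 1 else k - 2)).a

/-- `Δ_i` is a detachable segment of `Δ_0 + ⋯ + Δ_{k-1}`. -/
def Detachable (k : ℕ) (Δ : ℕ → Segment) (i : ℕ) : Prop :=
  (∀ j, j < k → j ≠ i → ¬ (Δ i).prec (Δ j) ∧ ¬ ((Δ i).shiftl).prec (Δ j)) ∨
  (∀ j, j < k → j ≠ i → ¬ (Δ j).prec (Δ i) ∧ ¬ ((Δ j).shiftl).prec (Δ i))

/-! ## Permutations, Bruhat order, smooth pairs -/

/-- The rank function `r_σ(i,j)` (0-based). -/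
def rankFn {k : ℕ} (σ : Equiv.Perm (Fin k)) (i j : Fin k) : ℕ :=
  (Finset.univ.filter fun u : Fin k => u ≤ i ∧ σ u ≤ j).card

/-- The Bruhat order, via the rank-function characterization. -/
def BruhatLE {k : ℕ} (τ σ : Equiv.Perm (Fin k)) : Prop :=
  ∀ i j : Fin k, rankFn σ i j ≤ rankFn τ i j

/-- The length `ℓ(σ)`. -/
def lenPerm {k : ℕ} (σ : Equiv.Perm (Fin k)) : ℕ :=
  (Finset.univ.filter fun p : Fin k × Fin k => p.1 < p.2 ∧ σ p.2 < σ p.1).card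

def IsTransposition {k : ℕ} (t : Equiv.Perm (Fin k)) : Prop :=
  ∃ i j : Fin k, i ≠ j ∧ t = Equiv.swap i j

/-- `(σ, σ0)` is a smooth pair. -/
def SmoothPair {k : ℕ} (σ0 σ : Equiv.Perm (Fin k)) : Prop :=
  BruhatLE σ0 σ ∧
    {t : Equiv.Perm (Fin k) | IsTransposition t ∧ BruhatLE (σ0 * t) σ}.ncard = lenPerm σ

/-- The ascent set `D(σ)` of a permutation, in 1-based indexing. -/
def Dset {k : ℕ} (σ : Equiv.Perm (Fin k)) : Set ℕ :=
  {i | ∃ (h1 : 1 ≤ i) (h2 : i < k), (σ ⟨i - 1, by omega⟩ : ℕ) < (σ ⟨i, h2⟩ : ℕ)} ∪ {k}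

/-- The flattened permutation `rmv_i(σ)`. -/
def rmv {k : ℕ} (σ : Equiv.Perm (Fin (k + 1))) (i : Fin (k + 1)) : Equiv.Perm (Fin k) :=
  ((finSuccAboveEquiv i).trans
    (σ.subtypeEquiv fun x => not_congr (EmbeddingLike.apply_eq_iff_eq σ).symm)).trans
    (finSuccAboveEquiv (σ i)).symm

/-! ## Bi-sequences -/

structure BiSeq (k : ℕ) where
  a : Fin k → ℤ
  b : Fin k → ℤ
  mono_a : Monotone a
  anti_b : Antitone b
  compat : ∀ i : Fin k, a i.rev ≤ b i + 1

def RegularBS {k : ℕ} (A : BiSeq k) : Prop := StrictMono A.a ∧ StrictAnti A.b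

/-- `σ` satisfies the defining recursion of `σ0(A)`. -/
def Sigma0Spec {k : ℕ} (A : BiSeq k) (σ : Equiv.Perm (Fin k)) : Prop :=
  ∀ i : Fin k,
    A.a (σ.symm i) ≤ A.b i + 1 ∧
    ∀ j : Fin k, A.a j ≤ A.b i + 1 → (∀ i' : Fin k, i < i' → σ.symm i' ≠ j) →
      j ≤ σ.symm i

def Avoids213 {k : ℕ} (σ : Equiv.Perm (Fin k)) : Prop :=
  ¬ ∃ i j l : Fin k, i < j ∧ j < l ∧ σ j < σ i ∧ σ i < σ l

/-- The multisegment `m_σ(A)`, consisting of the nonempty intervals among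
`[a_{σ⁻¹(i)}, b_i]`. -/
def mOf {k : ℕ} (A : BiSeq k) (σ : Equiv.Perm (Fin k)) : Multisegment :=
  ((Finset.univ.filter fun i : Fin k => A.a (σ.symm i) ≤ A.b i).attach.val).map
    fun i => { a := A.a (σ.symm i.1), b := A.b i.1,
               nonempty := by have := Finset.mem_filter.mp i.2; exact this.2 }

/-! ## Permutation matrices -/

def PermMat {k : ℕ} (σ : Equiv.Perm (Fin k)) : Matrix (Fin k) (Fin k) ℕ :=
  fun i j => if σ i = j then 1 else 0

/-- The equivalence relation generated by `i ∼ j` whenever `M_{i,l} = M_{j,l} = 1` for some `l`. -/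
def matRel {k : ℕ} (M : Matrix (Fin k) (Fin k) ℕ) : Fin k → Fin k → Prop :=
  Relation.EqvGen (fun i j => ∃ l, M i l = 1 ∧ M j l = 1)

/-!
Let `φ(m)` (`precPairCount m`) be the number of pairs `(x, y)` of segments of `m` with `x ≺ y`.
In a step `m' ⊢ m` the replaced pair loses its own link, its offspring is unlinked, and every
other segment is linked to the offspring at most as often as to the pair, so `φ(m') < φ(m)` and
`c(m) ≤ φ(m)`. Conversely, let `m` be regular and choose `x ≺ y` in `m` with `e(y) - b(x)`
minimal. Then no segment `G` of `m` satisfies `x ≺ G ≺ y`, and as the endpoints of `G` differ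
from those of `x` and `y`, `G` is linked to the offspring exactly as often as to the pair: `φ`
drops by exactly one. Steps keep regularity, so iterating gives a chain of length `φ(m)`.
-/

namespace Segment

instance decidablePrec (Δ Δ' : Segment) : Decidable (Δ.prec Δ') := by
  unfold prec; infer_instance

def precInd (Δ Δ' : Segment) : ℕ := if Δ.prec Δ' then 1 else 0

def linkInd (Δ Δ' : Segment) : ℕ := precInd Δ Δ' + precInd Δ' Δ

lemma not_prec_self (Δ : Segment) : ¬ Δ.prec Δ := fun h => h.1.false

lemma precInd_self (Δ : Segment) : precInd Δ Δ = 0 := if_neg Δ.not_prec_self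

lemma linkInd_of_prec {Δ Δ' : Segment} (h : Δ.prec Δ') : linkInd Δ Δ' = 1 := by
  have : ¬ Δ'.prec Δ := fun h' => (h.1.trans h'.1).false
  simp [linkInd, precInd, h, this]

section Offspring

variable {D D' E F G : Segment} (h : D.prec D') (hEa : E.a = D.a) (hEb : E.b = D'.b)
include h hEa hEb

lemma linkInd_offspring_self (hFa : F.a = D'.a) (hFb : F.b = D.b) : linkInd E F = 0 := by
  simp only [linkInd, precInd]
  split_ifs <;> simp only [prec] at * <;> omega

lemma linkInd_offspring_le (hFa : F.a = D'.a) (hFb : F.b = D.b) :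
    linkInd E G + linkInd F G ≤ linkInd D G + linkInd D' G := by
  simp only [linkInd, precInd]
  have := G.nonempty
  split_ifs <;> simp only [prec] at * <;> omega

lemma linkInd_union_le (hj : D'.a = D.b + 1) : linkInd E G ≤ linkInd D G + linkInd D' G := by
  simp only [linkInd, precInd]
  have := G.nonempty
  split_ifs <;> simp only [prec] at * <;> omega

variable (ha : G.a ≠ D.a) (ha' : G.a ≠ D'.a) (hb : G.b ≠ D.b) (hb' : G.b ≠ D'.b)
  (hbetween : ¬ (D.prec G ∧ G.prec D'))
include ha ha' hb hb' hbetween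

lemma linkInd_offspring_eq (hFa : F.a = D'.a) (hFb : F.b = D.b) :
    linkInd E G + linkInd F G = linkInd D G + linkInd D' G := by
  simp only [linkInd, precInd]
  have := G.nonempty
  split_ifs <;> simp only [prec] at * <;> omega

lemma linkInd_union_eq (hj : D'.a = D.b + 1) : linkInd E G = linkInd D G + linkInd D' G := by
  simp only [linkInd, precInd]
  have := G.nonempty
  split_ifs <;> simp only [prec] at * <;> omega

end Offspring

end Segment

open Segment

def linkCount (Δ : Segment) (m : Multisegment) : ℕ := (m.map Δ.linkInd).sum

def precPairCount (m : Multisegment) : ℕ := (m.map fun Δ => (m.map Δ.precInd).sum).sum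

lemma linkCount_cons (Δ Δ' : Segment) (m : Multisegment) :
    linkCount Δ (Δ' ::ₘ m) = linkInd Δ Δ' + linkCount Δ m := by
  simp [linkCount]

lemma precPairCount_cons (Δ : Segment) (m : Multisegment) :
    precPairCount (Δ ::ₘ m) = linkCount Δ m + precPairCount m := by
  have hlink : linkCount Δ m = (m.map Δ.precInd).sum + (m.map (precInd · Δ)).sum :=
    Multiset.sum_map_add
  simp only [precPairCount, hlink, Multiset.map_cons, Multiset.sum_cons, Multiset.sum_map_add,
    precInd_self]
  ring

lemma precPairCount_cons_cons (Δ Δ' : Segment) (m : Multisegment) :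
    precPairCount (Δ ::ₘ Δ' ::ₘ m) =
      linkInd Δ Δ' + linkCount Δ m + linkCount Δ' m + precPairCount m := by
  rw [precPairCount_cons, linkCount_cons, precPairCount_cons]; ring

lemma precPairCount_lt_of_step {m' m : Multisegment} (h : Step m' m) :
    precPairCount m' < precPairCount m := by
  obtain ⟨D, D', r, hDD', rfl, ⟨-, E, F, hEa, hEb, hFa, hFb, rfl⟩ | ⟨hj, E, hEa, hEb, rfl⟩⟩ := h
  · have hr : linkCount E r + linkCount F r ≤ linkCount D r + linkCount D' r := by
      simp only [linkCount, ← Multiset.sum_map_add]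
      exact Multiset.sum_map_le_sum_map _ _ fun G _ =>
        linkInd_offspring_le hDD' hEa hEb hFa hFb
    rw [precPairCount_cons_cons, precPairCount_cons_cons, linkInd_of_prec hDD',
      linkInd_offspring_self hDD' hEa hEb hFa hFb]
    omega
  · have hr : linkCount E r ≤ linkCount D r + linkCount D' r := by
      simp only [linkCount, ← Multiset.sum_map_add]
      exact Multiset.sum_map_le_sum_map _ _ fun G _ => linkInd_union_le hDD' hEa hEb hj
    rw [precPairCount_cons_cons, precPairCount_cons, linkInd_of_prec hDD']
    omega

lemma Regular.of_map_le {m m' : Multisegment} (hm : Regular m)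
    (ha : m'.map Segment.a ≤ m.map Segment.a) (hb : m'.map Segment.b ≤ m.map Segment.b) :
    Regular m' :=
  ⟨Multiset.nodup_of_le ha hm.1, Multiset.nodup_of_le hb hm.2⟩

lemma Regular.of_step {m' m : Multisegment} (h : Step m' m) (hm : Regular m) : Regular m' := by
  obtain ⟨D, D', r, -, rfl, ⟨-, E, F, hEa, hEb, hFa, hFb, rfl⟩ | ⟨-, E, hEa, hEb, rfl⟩⟩ := h
  · refine hm.of_map_le (le_of_eq ?_) (le_of_eq ?_)
    · simp [hEa, hFa]
    · simp [hEb, hFb, Multiset.cons_swap]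
  · refine hm.of_map_le ?_ ?_ <;>
      simp only [Multiset.map_cons, hEa, hEb, Multiset.cons_le_cons_iff] <;>
      exact Multiset.le_cons_self _ _

lemma Regular.endpoints_ne {D D' G : Segment} {r : Multisegment}
    (hm : Regular (D ::ₘ D' ::ₘ r)) (hG : G ∈ r) :
    G.a ≠ D.a ∧ G.a ≠ D'.a ∧ G.b ≠ D.b ∧ G.b ≠ D'.b := by
  obtain ⟨ha, hb⟩ := hm
  simp only [Multiset.map_cons, Multiset.nodup_cons, Multiset.mem_cons, Multiset.mem_map]
    at ha hb
  exact ⟨fun e => ha.1 (.inr ⟨G, hG, e⟩), fun e => ha.2.1 ⟨G, hG, e⟩,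
    fun e => hb.1 (.inr ⟨G, hG, e⟩), fun e => hb.2.1 ⟨G, hG, e⟩⟩

lemma exists_prec_of_precPairCount_ne_zero {m : Multisegment} (h : precPairCount m ≠ 0) :
    ∃ x ∈ m, ∃ y ∈ m, x.prec y := by
  contrapose! h
  simpa [precPairCount, Multiset.sum_eq_zero_iff, precInd] using h

lemma exists_prec_not_between {m : Multisegment} (h : ∃ x ∈ m, ∃ y ∈ m, x.prec y) :
    ∃ x ∈ m, ∃ y ∈ m, x.prec y ∧ ∀ G ∈ m, ¬ (x.prec G ∧ G.prec y) := by
  classical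
  obtain ⟨x₀, hx₀, y₀, hy₀, hxy₀⟩ := h
  set S := (m.toFinset ×ˢ m.toFinset).filter fun p => p.1.prec p.2
  obtain ⟨⟨x, y⟩, hS, hmin⟩ :=
    S.exists_min_image (fun p => p.2.b - p.1.a) ⟨(x₀, y₀), by simp [S, hx₀, hy₀, hxy₀]⟩
  simp only [S, Finset.mem_filter, Finset.mem_product, Multiset.mem_toFinset] at hS
  refine ⟨x, hS.1.1, y, hS.1.2, hS.2, fun G hG ⟨hxG, hGy⟩ => ?_⟩
  have hmin' := hmin (x, G) (by simp [S, hS.1.1, hG, hxG])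
  dsimp only at hmin'
  have := G.nonempty
  simp only [prec] at hxG hGy
  omega

lemma exists_step_precPairCount_succ_of_not_between {x y : Segment} {r : Multisegment}
    (hreg : Regular (x ::ₘ y ::ₘ r)) (hxy : x.prec y)
    (hbetween : ∀ G ∈ r, ¬ (x.prec G ∧ G.prec y)) :
    ∃ m', Step m' (x ::ₘ y ::ₘ r) ∧ precPairCount m' + 1 = precPairCount (x ::ₘ y ::ₘ r) := by
  obtain ⟨hxa, hya, -⟩ := id hxy
  have := y.nonempty
  let E : Segment := ⟨x.a, y.b, by omega⟩
  by_cases hoverlap : y.a ≤ x.b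
  · let F : Segment := ⟨y.a, x.b, hoverlap⟩
    have hr : linkCount E r + linkCount F r = linkCount x r + linkCount y r := by
      simp only [linkCount, ← Multiset.sum_map_add]
      refine congrArg _ (Multiset.map_congr rfl fun G hG => ?_)
      obtain ⟨ha, ha', hb, hb'⟩ := hreg.endpoints_ne hG
      exact linkInd_offspring_eq hxy rfl rfl ha ha' hb hb' (hbetween G hG) rfl rfl
    refine ⟨E ::ₘ F ::ₘ r, ⟨x, y, r, hxy, rfl, .inl ⟨hoverlap, E, F, rfl, rfl, rfl, rfl, rfl⟩⟩, ?_⟩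
    rw [precPairCount_cons_cons, precPairCount_cons_cons, linkInd_of_prec hxy,
      linkInd_offspring_self (E := E) (F := F) hxy rfl rfl rfl rfl]
    omega
  · have hj : y.a = x.b + 1 := by omega
    have hr : linkCount E r = linkCount x r + linkCount y r := by
      simp only [linkCount, ← Multiset.sum_map_add]
      refine congrArg _ (Multiset.map_congr rfl fun G hG => ?_)
      obtain ⟨ha, ha', hb, hb'⟩ := hreg.endpoints_ne hG
      exact linkInd_union_eq hxy rfl rfl ha ha' hb hb' (hbetween G hG) hj
    refine ⟨E ::ₘ r, ⟨x, y, r, hxy, rfl, .inr ⟨hj, E, rfl, rfl, rfl⟩⟩, ?_⟩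
    rw [precPairCount_cons_cons, precPairCount_cons, linkInd_of_prec hxy]
    omega

lemma exists_step_precPairCount_succ {m : Multisegment} (hreg : Regular m)
    (h : precPairCount m ≠ 0) : ∃ m', Step m' m ∧ precPairCount m' + 1 = precPairCount m := by
  obtain ⟨x, hx, y, hy, hxy, hbetween⟩ :=
    exists_prec_not_between (exists_prec_of_precPairCount_ne_zero h)
  obtain ⟨t, rfl⟩ := Multiset.exists_cons_of_mem hx
  have hyt : y ∈ t := (Multiset.mem_cons.mp hy).resolve_left fun e => x.not_prec_self (e ▸ hxy)
  obtain ⟨r, rfl⟩ := Multiset.exists_cons_of_mem hyt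
  exact exists_step_precPairCount_succ_of_not_between hreg hxy fun G hG =>
    hbetween G (by simp [hG])

lemma StepN.tail {l : ℕ} {m₁ m₂ m₃ : Multisegment} (h : StepN l m₁ m₂) (h' : Step m₂ m₃) :
    StepN (l + 1) m₁ m₃ := by
  induction l generalizing m₁ with
  | zero => exact ⟨m₃, h ▸ h', rfl⟩
  | succ l ih =>
    obtain ⟨p, hp, hpm⟩ := h
    exact ⟨p, hp, ih hpm⟩

lemma StepN.precPairCount_add_le {l : ℕ} {m' m : Multisegment} (h : StepN l m' m) :
    precPairCount m' + l ≤ precPairCount m := by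
  induction l generalizing m' with
  | zero => exact (congrArg precPairCount h).le
  | succ l ih =>
    obtain ⟨p, hp, hpm⟩ := h
    have := precPairCount_lt_of_step hp
    have := ih hpm
    omega

lemma exists_stepN_precPairCount {m : Multisegment} (hreg : Regular m) :
    ∃ m', StepN (precPairCount m) m' m := by
  induction hn : precPairCount m generalizing m with
  | zero => exact ⟨m, rfl⟩
  | succ n ih =>
    obtain ⟨m₁, hstep, hm₁⟩ := exists_step_precPairCount_succ hreg (by omega)
    obtain ⟨m', hm'⟩ := ih (hreg.of_step hstep) (by omega)
    exact ⟨m', hm'.tail hstep⟩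

lemma complexity_eq_precPairCount {m : Multisegment} (hreg : Regular m) :
    complexity m = precPairCount m := by
  have hbdd : ∀ l ∈ {l : ℕ | ∃ m', StepN l m' m}, l ≤ precPairCount m := by
    rintro l ⟨m', hm'⟩
    have := hm'.precPairCount_add_le
    omega
  obtain ⟨m', hm'⟩ := exists_stepN_precPairCount hreg
  exact le_antisymm (csSup_le ⟨0, m, rfl⟩ hbdd) (le_csSup ⟨_, hbdd⟩ ⟨m', hm'⟩)

lemma precPairCount_map {ι : Type*} (s : Finset ι) (f : ι → Segment) :
    precPairCount (s.val.map f) = ((s ×ˢ s).filter fun p => (f p.1).prec (f p.2)).card := by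
  rw [Finset.card_filter, Finset.sum_product]
  simp [precPairCount, Multiset.map_map, precInd]

lemma precPairCount_msOf (k : ℕ) (Δ : ℕ → Segment) :
    precPairCount (msOf k Δ) = (Xset k Δ).ncard := by
  have hms : msOf k Δ = (Finset.range k).val.map Δ := rfl
  rw [hms, precPairCount_map, ← Set.ncard_coe_finset]
  congr 1
  ext p
  simp [Xset, and_assoc]

theorem statement3 (k : ℕ) (Δ : ℕ → Segment) (hreg : Regular (msOf k Δ)) :
    complexity (msOf k Δ) = (Xset k Δ).ncard :=
  (complexity_eq_precPairCount hreg).trans (precPairCount_msOf k Δ)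
end

section
/- Let A be a regular bi-sequence of length k, let σ0 = σ0(A), and let σ ∈ S_k with σ ≥ σ0 in the Bruhat order. Then d(m_σ(A)) = #{t ∈ T : σ0 ≤ σ0·t and σ0·t ≤ σ} and c(m_σ(A)) = ℓ(σ) − ℓ(σ0). Consequently, m_σ(A) is balanced if and only if (σ, σ0) is a smooth pair. -/
/-!
For an admissible permutation `τ` (one with `a_{τ⁻¹ i} ≤ b_i + 1` for all `i`), the elementary
operations `⊢` applied to `m_τ(A)` are exactly the passages to `m_{τ (u v)}(A)` along the
inversions `(u, v)` of `τ` whose two segments are linked, and `τ ↦ m_τ(A)` is injective on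
admissible permutations. The admissible permutations are exactly those above `σ₀` in the Bruhat
order. Hence the multisegments `n ⊨ m_σ(A)` are the `m_τ(A)` with `σ₀ ≤ τ ≤ σ` (the lifting
property of the Bruhat order supplies the chains of steps), and since `m_{σ₀}(A)` is the only
pairwise unlinked one, the APU ones are the `m_{σ₀ t}(A)` with `t` a transposition and
`σ₀ < σ₀ t ≤ σ`. Every step lowers the length of `τ`, and some step lowers it by exactly one, so
`c(m_σ(A)) = ℓ(σ) - ℓ(σ₀)`. Finally, the transpositions with `σ₀ t ≤ σ` are those with
`σ₀ < σ₀ t ≤ σ` together with the `ℓ(σ₀)` ones with `σ₀ t < σ₀`, which turns `d = c` into the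
smoothness of `(σ, σ₀)`.
-/

section

open Finset Equiv

variable {k : ℕ}

lemma Finset.sum_eq_add_add_sum_compl_pair {ι M : Type*} [Fintype ι] [DecidableEq ι]
    [AddCommMonoid M] {a b : ι} (hab : a ≠ b) (f : ι → M) :
    ∑ i, f i = f a + f b + ∑ i ∈ {a, b}ᶜ, f i := by
  rw [← sum_pair hab, sum_add_sum_compl]

lemma Finset.sum_sum_eq_pair_add {ι M : Type*} [Fintype ι] [DecidableEq ι]
    [AddCommMonoid M] {a b : ι} (hab : a ≠ b) (H : ι → ι → M) :
    ∑ x, ∑ y, H x y = (H a a + H a b + H b a + H b b) +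
      ∑ w ∈ {a, b}ᶜ, (H a w + H b w + H w a + H w b) +
      ∑ x ∈ {a, b}ᶜ, ∑ y ∈ {a, b}ᶜ, H x y := by
  simp only [sum_eq_add_add_sum_compl_pair hab, sum_add_distrib]
  abel

lemma Equiv.symm_mul_swap_apply {α : Type*} [DecidableEq α] (τ : Perm α) (u v x : α) :
    (τ * swap u v).symm x = swap u v (τ.symm x) := by
  rw [Perm.mul_def]
  simp

lemma Equiv.swap_apply_of_mem_compl_pair {α : Type*} [DecidableEq α] [Fintype α] {u v x : α}
    (hx : x ∈ ({u, v} : Finset α)ᶜ) : swap u v x = x := by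
  simp only [mem_compl, mem_insert, mem_singleton, not_or] at hx
  exact swap_apply_of_ne_of_ne hx.1 hx.2

/-- The rank function with strict bounds in `ℕ`, so that empty and full ranges are allowed. -/
def rankLt (σ : Perm (Fin k)) (p q : ℕ) : ℕ :=
  #{u : Fin k | u.val < p ∧ (σ u).val < q}

lemma rankLt_eq_sum (σ : Perm (Fin k)) (p q : ℕ) :
    rankLt σ p q = ∑ u, if u.val < p ∧ (σ u).val < q then 1 else 0 :=
  card_filter _ _

lemma rankFn_eq_rankLt (σ : Perm (Fin k)) (i j : Fin k) :
    rankFn σ i j = rankLt σ (i + 1) (j + 1) :=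
  congrArg card <| filter_congr fun u _ => by omega

lemma bruhatLE_iff_rankLt {τ σ : Perm (Fin k)} :
    BruhatLE τ σ ↔ ∀ p q, rankLt σ p q ≤ rankLt τ p q := by
  refine ⟨fun h p q => ?_, fun h i j => by simpa only [rankFn_eq_rankLt] using h (i + 1) (j + 1)⟩
  by_cases hpq : min p k = 0 ∨ min q k = 0
  · have hzero : ∀ π : Perm (Fin k), rankLt π p q = 0 := fun π => by
      rw [rankLt, card_eq_zero, filter_eq_empty_iff]
      intro u _
      have := (π u).isLt
      omega
    rw [hzero]
    exact Nat.zero_le _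
  · have hclamp : ∀ π : Perm (Fin k),
        rankLt π p q = rankFn π ⟨min p k - 1, by omega⟩ ⟨min q k - 1, by omega⟩ := fun π => by
      rw [rankFn_eq_rankLt]
      refine congrArg card (filter_congr fun u _ => ?_)
      have := (π u).isLt
      dsimp only
      omega
    rw [hclamp, hclamp]
    exact h _ _

lemma BruhatLE.refl (σ : Perm (Fin k)) : BruhatLE σ σ := fun _ _ => le_rfl

lemma BruhatLE.trans {σ₁ σ₂ σ₃ : Perm (Fin k)} (h₁ : BruhatLE σ₁ σ₂) (h₂ : BruhatLE σ₂ σ₃) :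
    BruhatLE σ₁ σ₃ := fun i j => (h₂ i j).trans (h₁ i j)

lemma rankLt_succ (σ : Perm (Fin k)) (x : Fin k) (q : ℕ) :
    rankLt σ (x.val + 1) q = rankLt σ x q + if (σ x).val < q then 1 else 0 := by
  rw [rankLt_eq_sum, rankLt_eq_sum, Fintype.sum_eq_add_sum_compl x,
    Fintype.sum_eq_add_sum_compl x,
    sum_congr rfl (g := fun u => if u.val < x.val ∧ (σ u).val < q then 1 else 0) fun u hu => ?_]
  · simp [add_comm]
  · have : u ≠ x := by simpa using hu
    split_ifs <;> omega

lemma BruhatLE.antisymm {τ σ : Perm (Fin k)} (h₁ : BruhatLE τ σ) (h₂ : BruhatLE σ τ) :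
    τ = σ := by
  rw [bruhatLE_iff_rankLt] at h₁ h₂
  have hrow : ∀ (x : Fin k) q, rankLt σ (x.val + 1) q = rankLt τ (x.val + 1) q :=
    fun x q => (h₁ _ _).antisymm (h₂ _ _)
  ext x
  have hσ := hrow x ((σ x).val + 1)
  have hτ := hrow x ((τ x).val + 1)
  simp only [rankLt_succ, (h₁ _ _).antisymm (h₂ _ _)] at hσ hτ
  split_ifs at hσ hτ <;> omega

lemma rankLt_mul_swap (σ : Perm (Fin k)) {u v : Fin k} (huv : u ≠ v) (p q : ℕ) :
    rankLt (σ * swap u v) p q +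
        ((if u.val < p ∧ (σ u).val < q then 1 else 0) +
          if v.val < p ∧ (σ v).val < q then 1 else 0) =
      rankLt σ p q +
        ((if v.val < p ∧ (σ u).val < q then 1 else 0) +
          if u.val < p ∧ (σ v).val < q then 1 else 0) := by
  have hswap : rankLt (σ * swap u v) p q =
      ∑ x, if (swap u v x).val < p ∧ (σ x).val < q then 1 else 0 := by
    rw [rankLt_eq_sum, ← Equiv.sum_comp (swap u v)]
    simp only [swap_apply_self, Perm.mul_apply]
  rw [hswap, rankLt_eq_sum, sum_eq_add_add_sum_compl_pair huv,
    sum_eq_add_add_sum_compl_pair huv (f := fun x => if x.val < p ∧ _ then 1 else 0)]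
  rw [sum_congr rfl fun x hx => by rw [swap_apply_of_mem_compl_pair hx], swap_apply_left,
    swap_apply_right]
  ring

lemma bruhatLE_mul_swap_of_lt (σ : Perm (Fin k)) {u v : Fin k} (huv : u < v)
    (hσ : σ v < σ u) : BruhatLE (σ * swap u v) σ := by
  refine bruhatLE_iff_rankLt.mpr fun p q => ?_
  have := rankLt_mul_swap σ huv.ne p q
  split_ifs at this <;> omega

lemma bruhatLE_mul_swap_of_gt (σ : Perm (Fin k)) {u v : Fin k} (huv : u < v)
    (hσ : σ u < σ v) : BruhatLE σ (σ * swap u v) := by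
  simpa [mul_assoc] using bruhatLE_mul_swap_of_lt (σ * swap u v) huv (by simpa using hσ)

lemma Equiv.mul_swap_ne_self {α : Type*} [DecidableEq α] (σ : Perm α) {u v : α} (huv : u ≠ v) :
    σ * swap u v ≠ σ := by
  intro h
  have := congrArg (· u) h
  simp only [Perm.mul_apply, swap_apply_left, EmbeddingLike.apply_eq_iff_eq] at this
  exact huv this.symm

lemma lenPerm_eq_sum (σ : Perm (Fin k)) :
    lenPerm σ = ∑ x, ∑ y, if x < y ∧ σ y < σ x then 1 else 0 := by
  rw [lenPerm, card_filter, Fintype.sum_prod_type]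

lemma lenPerm_mul_swap (σ : Perm (Fin k)) {u v : Fin k} (huv : u < v) (hσ : σ v < σ u) :
    lenPerm (σ * swap u v) + 1 + 2 * #{w | u < w ∧ w < v ∧ σ v < σ w ∧ σ w < σ u} =
      lenPerm σ := by
  set s := swap u v
  have hlen : lenPerm (σ * s) = ∑ x, ∑ y, if s x < s y ∧ σ y < σ x then 1 else 0 := by
    rw [lenPerm_eq_sum, ← Equiv.sum_comp s]
    refine sum_congr rfl fun x _ => ?_
    rw [← Equiv.sum_comp s]
    simp only [s, swap_apply_self, Perm.mul_apply]
  -- Only pairs meeting `{u, v}` can change status; for `w ∉ {u, v}` the four pairs joining `w`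
  -- to `u` or `v` lose two inversions if `u < w < v` and `σ v < σ w < σ u`, and none otherwise.
  have hmid : ∀ w ∈ ({u, v} : Finset (Fin k))ᶜ,
      (((if s u < s w ∧ σ w < σ u then 1 else 0) + (if s v < s w ∧ σ w < σ v then 1 else 0) +
        (if s w < s u ∧ σ u < σ w then 1 else 0) + if s w < s v ∧ σ v < σ w then 1 else 0) +
        2 * if u < w ∧ w < v ∧ σ v < σ w ∧ σ w < σ u then 1 else 0) =
      (if u < w ∧ σ w < σ u then 1 else 0) + (if v < w ∧ σ w < σ v then 1 else 0) +
        (if w < u ∧ σ u < σ w then 1 else 0) + if w < v ∧ σ v < σ w then 1 else 0 := by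
    intro w hw
    have hwu : w ≠ u := by rintro rfl; simp at hw
    have hwv : w ≠ v := by rintro rfl; simp at hw
    have hσu : σ w ≠ σ u := σ.injective.ne hwu
    have hσv : σ w ≠ σ v := σ.injective.ne hwv
    rw [swap_apply_of_mem_compl_pair hw, swap_apply_left, swap_apply_right]
    split_ifs <;> omega
  have hM : #{w | u < w ∧ w < v ∧ σ v < σ w ∧ σ w < σ u} =
      ∑ w ∈ ({u, v} : Finset (Fin k))ᶜ,
        if u < w ∧ w < v ∧ σ v < σ w ∧ σ w < σ u then 1 else 0 := by
    rw [card_filter, sum_eq_add_add_sum_compl_pair huv.ne]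
    simp
  rw [hlen, lenPerm_eq_sum,
    sum_sum_eq_pair_add huv.ne (fun x y => if s x < s y ∧ σ y < σ x then 1 else 0),
    sum_sum_eq_pair_add huv.ne (fun x y => if x < y ∧ σ y < σ x then 1 else 0), hM,
    ← sum_congr rfl hmid,
    sum_congr rfl fun x hx => sum_congr rfl fun y hy => by
      rw [swap_apply_of_mem_compl_pair hx, swap_apply_of_mem_compl_pair hy]]
  simp only [sum_add_distrib, ← mul_sum, s, swap_apply_left, swap_apply_right, lt_irrefl,
    false_and, and_false, if_false, huv, hσ, and_self, if_true, not_lt.mpr huv.le,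
    not_lt.mpr hσ.le]
  omega

lemma rankLt_congr {σ τ : Perm (Fin k)} {p : ℕ} (h : ∀ w : Fin k, w.val < p → σ w = τ w)
    (q : ℕ) : rankLt σ p q = rankLt τ p q :=
  congrArg card <| filter_congr fun w _ => and_congr_right fun hw => by rw [h w hw]

lemma rankLt_eq_add_card (π : Perm (Fin k)) (p : ℕ) {c q : ℕ} (hcq : c ≤ q) :
    rankLt π p q = rankLt π p c + #{w : Fin k | w.val < p ∧ c ≤ (π w).val ∧ (π w).val < q} := by
  simp only [rankLt, card_filter, ← sum_add_distrib]
  refine sum_congr rfl fun w _ => ?_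
  split_ifs <;> omega

lemma rankLt_lt_rankLt_of_eqOn {σ τ : Perm (Fin k)} (hR : ∀ p q, rankLt σ p q ≤ rankLt τ p q)
    {u v : Fin k} (hagree : ∀ w : Fin k, w.val < u.val → σ w = τ w) (hτv : τ u ≤ σ v)
    (hgap : ∀ w, u < w → w < v → τ u ≤ σ w → σ u ≤ σ w) {p q : ℕ} (hup : u.val < p)
    (hpv : p ≤ v.val) (hvq : (σ v).val < q) (hqu : q ≤ (σ u).val) :
    rankLt σ p q < rankLt τ p q := by
  have hcq : (τ u).val ≤ q := by omega
  rw [rankLt_eq_add_card σ p hcq, rankLt_eq_add_card τ p hcq]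
  refine Nat.add_lt_add_of_le_of_lt (hR p _) (card_lt_card ?_)
  -- the positions counted for `σ` all lie below `u`, where `σ = τ`; `u` is counted only for `τ`
  refine (ssubset_iff_of_subset fun w hw => ?_).mpr ⟨u, ?_, ?_⟩
  · simp only [mem_filter, mem_univ, true_and] at hw ⊢
    have hwu : w.val < u.val := by
      rcases lt_trichotomy w u with h | rfl | h
      · exact h
      · omega
      · have := hgap w h (by omega) hw.2.1
        omega
    rwa [← hagree w hwu]
  · simp only [mem_filter, mem_univ, true_and]
    omega
  · simp only [mem_filter, mem_univ, true_and]
    omega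

/-- The lifting property of the Bruhat order. -/
lemma BruhatLE.exists_lift {τ σ : Perm (Fin k)} (hle : BruhatLE τ σ) (hne : τ ≠ σ) :
    ∃ u v, u < v ∧ σ v < σ u ∧ BruhatLE τ (σ * swap u v) := by
  have hR := bruhatLE_iff_rankLt.mp hle
  have hdiff : ∃ x, σ x ≠ τ x := by
    by_contra! h
    exact hne (Equiv.ext fun x => (h x).symm)
  obtain ⟨u, hu, hmin_u⟩ := wellFounded_lt.has_min {x | σ x ≠ τ x} hdiff
  have hagree : ∀ w : Fin k, w.val < u.val → σ w = τ w := fun w hw => by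
    by_contra h
    exact hmin_u w h hw
  have hτu : τ u < σ u := by
    have hrow := hR (u.val + 1) ((σ u).val + 1)
    rw [rankLt_succ, rankLt_succ, rankLt_congr hagree] at hrow
    have : τ u ≤ σ u := by split_ifs at hrow <;> omega
    exact this.lt_of_ne (Ne.symm hu)
  obtain ⟨v, ⟨huv, hτv, hvu⟩, hmin_v⟩ :=
    wellFounded_lt.has_min {w | u < w ∧ τ u ≤ σ w ∧ σ w < σ u} ⟨σ.symm (τ u), by
      have hne : σ.symm (τ u) ≠ u := fun h => hu <| by
        have := σ.apply_symm_apply (τ u)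
        rwa [h] at this
      refine ⟨(lt_or_gt_of_ne hne).resolve_left fun hlt => hne ?_, by simp, by simpa⟩
      exact τ.injective (by rw [← hagree _ hlt, apply_symm_apply])⟩
  have hgap : ∀ w, u < w → w < v → τ u ≤ σ w → σ u ≤ σ w := fun w h₁ h₂ h₃ =>
    not_lt.mp fun h₄ => hmin_v w ⟨h₁, h₃, h₄⟩ h₂
  refine ⟨u, v, huv, hvu, bruhatLE_iff_rankLt.mpr fun p q => ?_⟩
  have hswap := rankLt_mul_swap σ huv.ne p q
  have hσ := hR p q
  by_cases hbox : u.val < p ∧ p ≤ v.val ∧ (σ v).val < q ∧ q ≤ (σ u).val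
  · have := rankLt_lt_rankLt_of_eqOn hR hagree hτv hgap hbox.1 hbox.2.1 hbox.2.2.1 hbox.2.2.2
    split_ifs at hswap <;> omega
  · split_ifs at hswap <;> omega

lemma BruhatLE.lenPerm_le {τ σ : Perm (Fin k)} (h : BruhatLE τ σ) : lenPerm τ ≤ lenPerm σ := by
  induction hn : lenPerm σ using Nat.strong_induction_on generalizing σ with
  | _ n ih =>
    by_cases hne : τ = σ
    · rw [hne, hn]
    obtain ⟨u, v, huv, hσ, hle⟩ := h.exists_lift hne
    have := lenPerm_mul_swap σ huv hσ
    exact (ih _ (by omega) hle rfl).trans (by omega)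

lemma bruhatLE_mul_swap_self_iff (σ : Perm (Fin k)) {u v : Fin k} (huv : u < v) :
    BruhatLE (σ * swap u v) σ ↔ σ v < σ u := by
  refine ⟨fun h => ?_, bruhatLE_mul_swap_of_lt σ huv⟩
  by_contra! hσ
  have hσ' : σ u < σ v := hσ.lt_of_ne (σ.injective.ne huv.ne)
  exact mul_swap_ne_self σ huv.ne (h.antisymm (bruhatLE_mul_swap_of_gt σ huv hσ'))

lemma isTransposition_iff_exists_lt {t : Perm (Fin k)} :
    IsTransposition t ↔ ∃ u v, u < v ∧ t = swap u v := by
  refine ⟨fun ⟨i, j, hij, ht⟩ => ?_, fun ⟨u, v, huv, ht⟩ => ⟨u, v, huv.ne, ht⟩⟩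
  rcases hij.lt_or_gt with h | h
  · exact ⟨i, j, h, ht⟩
  · exact ⟨j, i, h, ht.trans (swap_comm i j)⟩

lemma swap_injOn_lt : Set.InjOn (fun p : Fin k × Fin k => swap p.1 p.2) {p | p.1 < p.2} := by
  rintro ⟨u, v⟩ (huv : u < v) ⟨u', v'⟩ (huv' : u' < v') h
  have e : ∀ x, swap u v x = swap u' v' x := fun x => congrArg (· x) h
  have h1 := e u
  have h2 := e v
  simp only [swap_apply_left, swap_apply_right, swap_apply_def] at h1 h2
  rw [Prod.mk.injEq]
  split_ifs at h1 h2 <;> constructor <;> omega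

lemma IsTransposition.bruhatLE_or {t : Perm (Fin k)} (ht : IsTransposition t)
    (σ : Perm (Fin k)) : BruhatLE σ (σ * t) ∨ BruhatLE (σ * t) σ := by
  obtain ⟨u, v, huv, rfl⟩ := isTransposition_iff_exists_lt.mp ht
  rcases lt_or_gt_of_ne (σ.injective.ne huv.ne) with h | h
  · exact .inl (bruhatLE_mul_swap_of_gt σ huv h)
  · exact .inr (bruhatLE_mul_swap_of_lt σ huv h)

lemma ncard_transpositions_bruhatLE_self (σ : Perm (Fin k)) :
    {t | IsTransposition t ∧ BruhatLE (σ * t) σ}.ncard = lenPerm σ := by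
  have himage : {t | IsTransposition t ∧ BruhatLE (σ * t) σ} =
      (fun p : Fin k × Fin k => swap p.1 p.2) '' {p | p.1 < p.2 ∧ σ p.2 < σ p.1} := by
    ext t
    simp only [Set.mem_ofPred_eq, Set.mem_image, isTransposition_iff_exists_lt, Prod.exists]
    constructor
    · rintro ⟨⟨u, v, huv, rfl⟩, h⟩
      exact ⟨u, v, ⟨huv, (bruhatLE_mul_swap_self_iff σ huv).mp h⟩, rfl⟩
    · rintro ⟨u, v, ⟨huv, h⟩, rfl⟩
      exact ⟨⟨u, v, huv, rfl⟩, bruhatLE_mul_swap_of_lt σ huv h⟩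
  rw [himage, (swap_injOn_lt.mono fun p hp => hp.1).ncard_image, lenPerm,
    ← Set.ncard_coe_finset]
  simp

lemma ncard_transpositions_bruhatLE {σ₀ σ : Perm (Fin k)} (hle : BruhatLE σ₀ σ) :
    {t | IsTransposition t ∧ BruhatLE (σ₀ * t) σ}.ncard =
      {t | IsTransposition t ∧ BruhatLE σ₀ (σ₀ * t) ∧ BruhatLE (σ₀ * t) σ}.ncard +
        lenPerm σ₀ := by
  have hunion : {t | IsTransposition t ∧ BruhatLE (σ₀ * t) σ} =
      {t | IsTransposition t ∧ BruhatLE σ₀ (σ₀ * t) ∧ BruhatLE (σ₀ * t) σ} ∪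
        {t | IsTransposition t ∧ BruhatLE (σ₀ * t) σ₀} := by
    ext t
    simp only [Set.mem_ofPred_eq, Set.mem_union]
    constructor
    · rintro ⟨ht, h⟩
      exact (ht.bruhatLE_or σ₀).imp (fun h' => ⟨ht, h', h⟩) fun h' => ⟨ht, h'⟩
    · rintro (⟨ht, -, h⟩ | ⟨ht, h⟩)
      exacts [⟨ht, h⟩, ⟨ht, h.trans hle⟩]
  have hdisj : Disjoint {t | IsTransposition t ∧ BruhatLE σ₀ (σ₀ * t) ∧ BruhatLE (σ₀ * t) σ}
      {t | IsTransposition t ∧ BruhatLE (σ₀ * t) σ₀} := by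
    rw [Set.disjoint_left]
    rintro t ⟨⟨u, v, huv, rfl⟩, h₁, -⟩ ⟨-, h₂⟩
    exact mul_swap_ne_self σ₀ huv (h₂.antisymm h₁)
  rw [hunion, Set.ncard_union_eq hdisj, ncard_transpositions_bruhatLE_self]

lemma card_corner_add_add (π : Perm (Fin k)) {c i : ℕ} (hc : c ≤ k) (hi : i ≤ k) :
    #{x : Fin k | c ≤ x.val ∧ i ≤ (π x).val} + c + i = k + rankLt π c i := by
  have hrow : ∑ x : Fin k, (if x.val < c then 1 else 0) = c := by
    rw [← card_filter, Fin.card_filter_val_lt, min_eq_right hc]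
  have hcol : ∑ x : Fin k, (if (π x).val < i then 1 else 0) = i := by
    rw [Equiv.sum_comp π (fun y : Fin k => if y.val < i then 1 else 0), ← card_filter,
      Fin.card_filter_val_lt, min_eq_right hi]
  have hsum : ∑ x : Fin k, ((if c ≤ x.val ∧ i ≤ (π x).val then 1 else 0) +
      (if x.val < c then 1 else 0) + if (π x).val < i then 1 else 0) =
      ∑ x : Fin k, (1 + if x.val < c ∧ (π x).val < i then 1 else 0) :=
    sum_congr rfl fun x _ => by split_ifs <;> omega
  rw [sum_add_distrib, sum_add_distrib, hrow, hcol] at hsum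
  rw [card_filter, hsum, sum_add_distrib, rankLt_eq_sum, sum_const, card_univ,
    Fintype.card_fin, smul_eq_mul, mul_one]

attribute [ext] Segment

namespace BiSeq

variable (A : BiSeq k)

def Admissible (τ : Perm (Fin k)) : Prop :=
  ∀ i, A.a (τ.symm i) ≤ A.b i + 1

/-- An inversion `(u, v)` of `τ` whose intervals `[a_u, b_{τ u}]` and `[a_v, b_{τ v}]` are
linked; `m_{τ * (u v)}(A)` is `m_τ(A)` with this pair replaced by its offspring. -/
def IsLinkedInversion (τ : Perm (Fin k)) (u v : Fin k) : Prop :=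
  u < v ∧ τ v < τ u ∧ A.a v ≤ A.b (τ u) + 1

/-- The contribution of `i` to `m_τ(A)`. -/
def segsAt (A : BiSeq k) (τ : Perm (Fin k)) (i : Fin k) : Multisegment :=
  if h : A.a (τ.symm i) ≤ A.b i then {⟨A.a (τ.symm i), A.b i, h⟩} else 0

variable {A} {τ : Perm (Fin k)}

lemma exists_cutoff (i : Fin k) : ∃ c : Fin k, ∀ p, p ≤ c ↔ A.a p ≤ A.b i + 1 := by
  set S : Finset (Fin k) := {p | A.a p ≤ A.b i + 1}
  have hS : S.Nonempty := ⟨i.rev, mem_filter.mpr ⟨mem_univ _, A.compat i⟩⟩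
  refine ⟨S.max' hS, fun p => ⟨fun hp => (A.mono_a hp).trans ?_,
    fun hp => S.le_max' p (mem_filter.mpr ⟨mem_univ _, hp⟩)⟩⟩
  exact (mem_filter.mp (S.max'_mem hS)).2

lemma Admissible.mul_swap (hτ : A.Admissible τ) {u v : Fin k}
    (h : A.IsLinkedInversion τ u v) : A.Admissible (τ * swap u v) := by
  obtain ⟨huv, hτuv, hlink⟩ := h
  intro i
  obtain ⟨x, rfl⟩ := τ.surjective i
  rw [symm_mul_swap_apply, symm_apply_apply]
  by_cases hxu : x = u
  · rwa [hxu, swap_apply_left]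
  by_cases hxv : x = v
  · rw [hxv, swap_apply_right]
    linarith [A.mono_a huv.le, A.anti_b hτuv.le]
  · simpa [swap_apply_of_ne_of_ne hxu hxv] using hτ (τ x)

lemma IsLinkedInversion.lenPerm_lt {u v : Fin k}
    (h : A.IsLinkedInversion τ u v) : lenPerm (τ * swap u v) < lenPerm τ := by
  have := lenPerm_mul_swap τ h.1 h.2.1
  omega

/-- Moving `v` down to a position whose value lies strictly between `τ v` and `τ u` keeps the
inversion linked, since `a` is monotone; at a closest such pair the length drops by one. -/
lemma IsLinkedInversion.exists_lenPerm_add_one {u v : Fin k}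
    (h : A.IsLinkedInversion τ u v) :
    ∃ u' v', A.IsLinkedInversion τ u' v' ∧ lenPerm (τ * swap u' v') + 1 = lenPerm τ := by
  induction hd : v.val - u.val using Nat.strong_induction_on generalizing v with
  | _ d ih =>
    obtain ⟨huv, hτuv, hlink⟩ := h
    by_cases hM : #{w | u < w ∧ w < v ∧ τ v < τ w ∧ τ w < τ u} = 0
    · exact ⟨u, v, ⟨huv, hτuv, hlink⟩, by simpa [hM] using lenPerm_mul_swap τ huv hτuv⟩
    · obtain ⟨w, hw⟩ := card_pos.mp (Nat.pos_of_ne_zero hM)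
      simp only [mem_filter, mem_univ, true_and] at hw
      exact ih _ (by omega) ⟨hw.1, hw.2.2.2, (A.mono_a hw.2.1.le).trans hlink⟩ rfl

lemma mOf_eq_sum : mOf A τ = ∑ i, A.segsAt τ i := by
  set S : Finset (Fin k) := {i | A.a (τ.symm i) ≤ A.b i}
  rw [← sum_subset (subset_univ S) fun i _ hi => dif_neg (by simpa [S] using hi), ← sum_attach,
    sum_eq_multiset_sum, mOf, ← Multiset.sum_map_singleton (Multiset.map _ _), Multiset.map_map]
  exact congrArg _ (Multiset.map_congr rfl fun i _ => by
    rw [Function.comp_apply, segsAt, dif_pos (mem_filter.mp i.2).2])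

lemma mem_segsAt {i : Fin k} {Δ : Segment} :
    Δ ∈ A.segsAt τ i ↔ Δ.a = A.a (τ.symm i) ∧ Δ.b = A.b i := by
  unfold segsAt
  split_ifs with h
  · simp [Segment.ext_iff]
  · simp only [Multiset.notMem_zero, false_iff]
    rintro ⟨ha, hb⟩
    exact h (ha ▸ hb ▸ Δ.nonempty)

lemma segsAt_eq_singleton {i : Fin k} {Δ : Segment} (ha : Δ.a = A.a (τ.symm i))
    (hb : Δ.b = A.b i) : A.segsAt τ i = {Δ} := by
  rw [segsAt, dif_pos (ha ▸ hb ▸ Δ.nonempty)]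
  congr 1
  ext
  exacts [ha.symm, hb.symm]

lemma segsAt_eq_zero {i : Fin k} (h : A.b i < A.a (τ.symm i)) : A.segsAt τ i = 0 :=
  dif_neg (not_le.mpr h)

lemma mem_mOf {Δ : Segment} : Δ ∈ mOf A τ ↔ ∃ i, Δ.a = A.a (τ.symm i) ∧ Δ.b = A.b i := by
  simp [mOf_eq_sum, Multiset.mem_sum, mem_segsAt]

lemma mOf_eq_add_add {i j : Fin k} (hij : i ≠ j) :
    mOf A τ = A.segsAt τ i + A.segsAt τ j + ∑ x ∈ {i, j}ᶜ, A.segsAt τ x := by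
  rw [mOf_eq_sum, sum_eq_add_add_sum_compl_pair hij]

lemma mOf_mul_swap_eq_add_add {u v : Fin k} (huv : u ≠ v) :
    mOf A (τ * swap u v) = A.segsAt (τ * swap u v) (τ u) + A.segsAt (τ * swap u v) (τ v) +
      ∑ x ∈ {τ u, τ v}ᶜ, A.segsAt τ x := by
  rw [mOf_eq_add_add (τ.injective.ne huv)]
  refine congrArg _ (sum_congr rfl fun x hx => ?_)
  simp only [mem_compl, mem_insert, mem_singleton, not_or] at hx
  have hu : τ.symm x ≠ u := fun h => hx.1 (by rw [← h, apply_symm_apply])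
  have hv : τ.symm x ≠ v := fun h => hx.2 (by rw [← h, apply_symm_apply])
  simp only [segsAt, symm_mul_swap_apply, swap_apply_of_ne_of_ne hu hv]

lemma IsLinkedInversion.step (hA : RegularBS A) {u v : Fin k} (h : A.IsLinkedInversion τ u v) :
    Step (mOf A (τ * swap u v)) (mOf A τ) := by
  obtain ⟨huv, hτuv, hlink⟩ := h
  have hau : A.a u < A.a v := hA.1 huv
  have hbu : A.b (τ u) < A.b (τ v) := hA.2 hτuv
  have hu : (τ * swap u v).symm (τ u) = v := by simp [symm_mul_swap_apply]
  have hv : (τ * swap u v).symm (τ v) = u := by simp [symm_mul_swap_apply]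
  set r := ∑ x ∈ {τ u, τ v}ᶜ, A.segsAt τ x
  set Δ : Segment := ⟨A.a u, A.b (τ u), by omega⟩
  set Δ' : Segment := ⟨A.a v, A.b (τ v), by omega⟩
  set E : Segment := ⟨A.a u, A.b (τ v), by omega⟩
  have hE : A.segsAt (τ * swap u v) (τ v) = {E} := segsAt_eq_singleton (by simp [E, hv]) rfl
  refine ⟨Δ, Δ', r, ⟨hau, hlink, hbu⟩, ?_, ?_⟩
  · rw [mOf_eq_add_add (τ.injective.ne huv.ne), segsAt_eq_singleton (Δ := Δ) (by simp [Δ]) rfl,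
      segsAt_eq_singleton (Δ := Δ') (by simp [Δ']) rfl, add_assoc, Multiset.singleton_add,
      Multiset.singleton_add]
  rw [mOf_mul_swap_eq_add_add huv.ne, hE]
  by_cases hv' : A.a v ≤ A.b (τ u)
  · set F : Segment := ⟨A.a v, A.b (τ u), hv'⟩
    refine .inl ⟨hv', E, F, rfl, rfl, rfl, rfl, ?_⟩
    rw [segsAt_eq_singleton (Δ := F) (by simp [F, hu]) rfl, add_comm ({F} : Multisegment),
      add_assoc, Multiset.singleton_add, Multiset.singleton_add]
  · refine .inr ⟨show A.a v = A.b (τ u) + 1 by omega, E, rfl, rfl, ?_⟩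
    rw [segsAt_eq_zero (by rw [hu]; omega), zero_add, Multiset.singleton_add]

lemma exists_isLinkedInversion_of_prec (hA : RegularBS A) {Δ Δ' : Segment} {r : Multisegment}
    (hm : mOf A τ = Δ ::ₘ Δ' ::ₘ r) (hprec : Δ.prec Δ') :
    ∃ u v, A.IsLinkedInversion τ u v ∧
      Δ.a = A.a u ∧ Δ.b = A.b (τ u) ∧ Δ'.a = A.a v ∧ Δ'.b = A.b (τ v) := by
  obtain ⟨i, hΔa, hΔb⟩ := mem_mOf.mp (hm ▸ Multiset.mem_cons_self _ _)
  obtain ⟨j, hΔ'a, hΔ'b⟩ :=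
    mem_mOf.mp (hm ▸ Multiset.mem_cons_of_mem (Multiset.mem_cons_self _ _))
  obtain ⟨u, rfl⟩ := τ.surjective i
  obtain ⟨v, rfl⟩ := τ.surjective j
  rw [symm_apply_apply] at hΔa hΔ'a
  obtain ⟨h₁, h₂, h₃⟩ := hprec
  rw [hΔa, hΔ'a] at h₁
  rw [hΔb, hΔ'b] at h₃
  exact ⟨u, v, ⟨hA.1.lt_iff_lt.mp h₁, hA.2.lt_iff_gt.mp h₃, by rwa [hΔ'a, hΔb] at h₂⟩,
    hΔa, hΔb, hΔ'a, hΔ'b⟩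

lemma exists_isLinkedInversion_of_step (hA : RegularBS A) {m : Multisegment}
    (h : Step m (mOf A τ)) : ∃ u v, A.IsLinkedInversion τ u v ∧ m = mOf A (τ * swap u v) := by
  obtain ⟨Δ, Δ', r, hprec, hm, hoff⟩ := h
  obtain ⟨u, v, hlinked, hΔa, hΔb, hΔ'a, hΔ'b⟩ := exists_isLinkedInversion_of_prec hA hm hprec
  have huv := hlinked.1.ne
  have hu : (τ * swap u v).symm (τ u) = v := by simp [symm_mul_swap_apply]
  have hv : (τ * swap u v).symm (τ v) = u := by simp [symm_mul_swap_apply]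
  have hr : r = ∑ x ∈ {τ u, τ v}ᶜ, A.segsAt τ x := by
    rw [mOf_eq_add_add (τ.injective.ne huv), segsAt_eq_singleton (Δ := Δ) (by simpa) hΔb,
      segsAt_eq_singleton (Δ := Δ') (by simpa) hΔ'b, add_assoc, Multiset.singleton_add,
      Multiset.singleton_add] at hm
    exact (Multiset.cons_inj_right _).mp ((Multiset.cons_inj_right _).mp hm.symm)
  refine ⟨u, v, hlinked, ?_⟩
  rw [mOf_mul_swap_eq_add_add huv, ← hr]
  rcases hoff with ⟨-, E, F, hEa, hEb, hFa, hFb, rfl⟩ | ⟨hmerge, E, hEa, hEb, rfl⟩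
  · rw [segsAt_eq_singleton (Δ := F) (by rw [hu, hFa, hΔ'a]) (by rw [hFb, hΔb]),
      segsAt_eq_singleton (Δ := E) (by rw [hv, hEa, hΔa]) (by rw [hEb, hΔ'b]),
      add_comm ({F} : Multisegment), add_assoc, Multiset.singleton_add, Multiset.singleton_add]
  · rw [segsAt_eq_zero (by rw [hu, ← hΔ'a, hmerge, hΔb]; omega),
      segsAt_eq_singleton (Δ := E) (by rw [hv, hEa, hΔa]) (by rw [hEb, hΔ'b]), zero_add,
      Multiset.singleton_add]

lemma regular_mOf (hA : RegularBS A) (τ : Perm (Fin k)) : Regular (mOf A τ) := by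
  constructor <;> rw [mOf, Multiset.map_map] <;> refine Multiset.Nodup.map ?_ (Finset.nodup _)
  · exact fun x y h => Subtype.ext (τ.symm.injective (hA.1.injective h))
  · exact fun x y h => Subtype.ext (hA.2.injective h)

/-- The nonempty segments of `m_τ(A)` determine `τ⁻¹ i` through `a`; the empty ones force
`a_{τ⁻¹ i} = b_i + 1` by admissibility. -/
lemma mOf_inj_of_admissible (hA : RegularBS A) {τ τ' : Perm (Fin k)} (hτ : A.Admissible τ)
    (hτ' : A.Admissible τ') (h : mOf A τ = mOf A τ') : τ = τ' := by
  have key : ∀ {π π' : Perm (Fin k)}, mOf A π = mOf A π' → ∀ i,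
      A.a (π.symm i) ≤ A.b i → A.a (π'.symm i) = A.a (π.symm i) := by
    intro π π' h i hi
    have hmem : (⟨_, _, hi⟩ : Segment) ∈ mOf A π' := h ▸ mem_mOf.mpr ⟨i, rfl, rfl⟩
    obtain ⟨j, hja, hjb⟩ := mem_mOf.mp hmem
    obtain rfl := hA.2.injective hjb.symm
    exact hja.symm
  refine symm_bijective.injective (Equiv.ext fun i => hA.1.injective ?_)
  by_cases hi : A.a (τ.symm i) ≤ A.b i
  · exact (key h i hi).symm
  by_cases hi' : A.a (τ'.symm i) ≤ A.b i
  · exact key h.symm i hi'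
  · linarith [hτ i, hτ' i]

end BiSeq

open BiSeq

variable {A : BiSeq k} {σ₀ : Perm (Fin k)}

lemma Sigma0Spec.admissible (hσ₀ : Sigma0Spec A σ₀) : A.Admissible σ₀ :=
  fun i => (hσ₀ i).1

/-- At the largest `i` with `τ⁻¹ i ≠ σ₀⁻¹ i`, the greedy choice made by `σ₀` gives
`τ⁻¹ i < σ₀⁻¹ i`, and these two positions form a linked inversion of `τ`. -/
lemma Sigma0Spec.exists_isLinkedInversion {τ : Perm (Fin k)} (hσ₀ : Sigma0Spec A σ₀)
    (hτ : A.Admissible τ) (hne : τ ≠ σ₀) : ∃ u v, A.IsLinkedInversion τ u v := by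
  have hdiff : ∃ i, τ.symm i ≠ σ₀.symm i := by
    by_contra! h
    exact hne (symm_bijective.injective (Equiv.ext h))
  obtain ⟨i, hi, hmax⟩ := wellFounded_gt.has_min {i | τ.symm i ≠ σ₀.symm i} hdiff
  have habove : ∀ i', i < i' → τ.symm i' = σ₀.symm i' := fun i' hi' => by
    by_contra h
    exact hmax i' h hi'
  have hle : τ.symm i ≤ σ₀.symm i := (hσ₀ i).2 _ (hτ i) fun i' hi' heq =>
    hi'.ne (τ.symm.injective ((habove i' hi').trans heq)).symm
  refine ⟨τ.symm i, σ₀.symm i, hle.lt_of_ne hi, ?_, by simpa using (hσ₀ i).1⟩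
  rw [apply_symm_apply]
  by_contra! hge
  rcases hge.lt_or_eq with hlt | heq
  · have := habove _ hlt
    rw [symm_apply_apply] at this
    exact hlt.ne (σ₀.symm.injective this)
  · exact hi (τ.symm_apply_eq.mpr heq)

lemma Sigma0Spec.bruhatLE_of_admissible {τ : Perm (Fin k)} (hσ₀ : Sigma0Spec A σ₀)
    (hτ : A.Admissible τ) : BruhatLE σ₀ τ := by
  induction hn : lenPerm τ using Nat.strong_induction_on generalizing τ with
  | _ n ih =>
    by_cases hne : τ = σ₀
    · rw [hne]
      exact .refl σ₀
    obtain ⟨u, v, h⟩ := hσ₀.exists_isLinkedInversion hτ hne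
    exact (ih _ (hn ▸ h.lenPerm_lt) (hτ.mul_swap h) rfl).trans
      (bruhatLE_mul_swap_of_lt τ h.1 h.2.1)

/-- With `c` the last position such that `a_c ≤ b_i + 1`, admissibility at `i` says that the
corner `{x > c, τ x ≥ i}` of the permutation matrix is empty; the size of that corner is
`k - (c + 1) - i` plus a rank of `τ`, and ranks only decrease going up in the Bruhat order. -/
lemma Sigma0Spec.admissible_of_bruhatLE {τ : Perm (Fin k)} (hσ₀ : Sigma0Spec A σ₀)
    (hle : BruhatLE σ₀ τ) : A.Admissible τ := by
  intro i
  by_contra hi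
  obtain ⟨c, hc⟩ := exists_cutoff (A := A) i
  have hσ₀corner : #{x : Fin k | c.val + 1 ≤ x.val ∧ i.val ≤ (σ₀ x).val} = 0 := by
    refine card_eq_zero.mpr (filter_eq_empty_iff.mpr fun x _ ⟨hcx, hix⟩ => ?_)
    have : x ≤ c := (hc x).mpr <| by
      simpa using (hσ₀.admissible (σ₀ x)).trans (by linarith [A.anti_b (show i ≤ σ₀ x from hix)])
    omega
  have hτcorner : 0 < #{x : Fin k | c.val + 1 ≤ x.val ∧ i.val ≤ (τ x).val} := by
    refine card_pos.mpr ⟨τ.symm i, mem_filter.mpr ⟨mem_univ _, ?_, by simp⟩⟩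
    have := (hc (τ.symm i)).not.mpr hi
    omega
  have := card_corner_add_add σ₀ (c := c.val + 1) c.isLt i.isLt.le
  have := card_corner_add_add τ (c := c.val + 1) c.isLt i.isLt.le
  have := bruhatLE_iff_rankLt.mp hle (c.val + 1) i
  omega

lemma Sigma0Spec.pairwiseUnlinked (hA : RegularBS A) (hσ₀ : Sigma0Spec A σ₀) :
    PairwiseUnlinked (mOf A σ₀) := by
  have hprec : ∀ {Δ Δ' r}, mOf A σ₀ = Δ ::ₘ Δ' ::ₘ r → ¬ Δ.prec Δ' := fun hm hp => by
    obtain ⟨u, v, h, -⟩ := exists_isLinkedInversion_of_prec hA hm hp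
    exact mul_swap_ne_self σ₀ h.1.ne ((bruhatLE_mul_swap_of_lt σ₀ h.1 h.2.1).antisymm
      (hσ₀.bruhatLE_of_admissible (hσ₀.admissible.mul_swap h)))
  rintro Δ Δ' r hm (hp | hp)
  · exact hprec hm hp
  · exact hprec (hm.trans (Multiset.cons_swap _ _ _)) hp

lemma Sigma0Spec.not_pairwiseUnlinked (hA : RegularBS A) (hσ₀ : Sigma0Spec A σ₀)
    {τ : Perm (Fin k)} (hτ : A.Admissible τ) (hne : τ ≠ σ₀) : ¬ PairwiseUnlinked (mOf A τ) := by
  obtain ⟨u, v, h⟩ := hσ₀.exists_isLinkedInversion hτ hne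
  obtain ⟨Δ, Δ', r, hprec, hm, -⟩ := h.step hA
  exact fun hpu => hpu Δ Δ' r hm (.inl hprec)

lemma Sigma0Spec.obt_mOf_iff (hA : RegularBS A) (hσ₀ : Sigma0Spec A σ₀) {σ : Perm (Fin k)}
    (hσ : BruhatLE σ₀ σ) {n : Multisegment} :
    Obt n (mOf A σ) ↔ ∃ τ, BruhatLE σ₀ τ ∧ BruhatLE τ σ ∧ n = mOf A τ := by
  constructor
  · intro h
    induction h using Relation.ReflTransGen.head_induction_on with
    | refl => exact ⟨σ, hσ, .refl σ, rfl⟩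
    | head hstep _ ih =>
      obtain ⟨τ, hτ₀, hτσ, rfl⟩ := ih
      obtain ⟨u, v, h, rfl⟩ := exists_isLinkedInversion_of_step hA hstep
      exact ⟨_, hσ₀.bruhatLE_of_admissible ((hσ₀.admissible_of_bruhatLE hτ₀).mul_swap h),
        (bruhatLE_mul_swap_of_lt τ h.1 h.2.1).trans hτσ, rfl⟩
  · rintro ⟨τ, hτ₀, hτσ, rfl⟩
    induction hn : lenPerm σ using Nat.strong_induction_on generalizing σ with
    | _ n ih =>
      by_cases hne : τ = σ
      · rw [hne]
        exact .refl
      obtain ⟨u, v, huv, hσuv, hle⟩ := hτσ.exists_lift hne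
      have hadm := hσ₀.admissible_of_bruhatLE (hτ₀.trans hle)
      have h : A.IsLinkedInversion σ u v :=
        ⟨huv, hσuv, by simpa [symm_mul_swap_apply] using hadm (σ u)⟩
      exact .tail (ih _ (hn ▸ h.lenPerm_lt) (hτ₀.trans hle) hle rfl) (h.step hA)

lemma StepN.tail_s4 : ∀ {l : ℕ} {m p n : Multisegment}, StepN l m p → Step p n → StepN (l + 1) m n
  | 0, _, _, _, h, hs => ⟨_, h ▸ hs, rfl⟩
  | _ + 1, _, _, _, ⟨q, hq, h⟩, hs => ⟨q, hq, h.tail_s4 hs⟩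

lemma exists_admissible_of_stepN (hA : RegularBS A) {σ : Perm (Fin k)} (hσ : A.Admissible σ) :
    ∀ {l : ℕ} {m : Multisegment}, StepN l m (mOf A σ) →
      ∃ τ, A.Admissible τ ∧ m = mOf A τ ∧ l + lenPerm τ ≤ lenPerm σ
  | 0, _, h => ⟨σ, hσ, h, le_of_eq (zero_add _)⟩
  | _ + 1, _, ⟨_, hs, h⟩ => by
    obtain ⟨τ, hτ, rfl, hlen⟩ := exists_admissible_of_stepN hA hσ h
    obtain ⟨u, v, h, rfl⟩ := exists_isLinkedInversion_of_step hA hs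
    have := h.lenPerm_lt
    exact ⟨_, hτ.mul_swap h, rfl, by omega⟩

lemma Sigma0Spec.stepN_mOf (hA : RegularBS A) (hσ₀ : Sigma0Spec A σ₀) {τ : Perm (Fin k)}
    (hτ : A.Admissible τ) : StepN (lenPerm τ - lenPerm σ₀) (mOf A σ₀) (mOf A τ) := by
  induction hn : lenPerm τ using Nat.strong_induction_on generalizing τ with
  | _ n ih =>
    by_cases hne : τ = σ₀
    · rw [← hn, hne, Nat.sub_self]
      rfl
    obtain ⟨u, v, h⟩ := hσ₀.exists_isLinkedInversion hτ hne
    obtain ⟨u', v', h', hlen⟩ := h.exists_lenPerm_add_one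
    have hτ' := hτ.mul_swap h'
    have := (hσ₀.bruhatLE_of_admissible hτ').lenPerm_le
    have hchain := (ih _ (by omega) hτ' rfl).tail_s4 (h'.step hA)
    rwa [show lenPerm (τ * swap u' v') - lenPerm σ₀ + 1 = n - lenPerm σ₀ by omega] at hchain

lemma Sigma0Spec.complexity_mOf (hA : RegularBS A) (hσ₀ : Sigma0Spec A σ₀) {σ : Perm (Fin k)}
    (hσ : BruhatLE σ₀ σ) : complexity (mOf A σ) = lenPerm σ - lenPerm σ₀ := by
  have hadm := hσ₀.admissible_of_bruhatLE hσ
  have hub : ∀ l ∈ {l | ∃ m, StepN l m (mOf A σ)}, l ≤ lenPerm σ - lenPerm σ₀ := by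
    rintro l ⟨m, hm⟩
    obtain ⟨τ, hτ, -, hlen⟩ := exists_admissible_of_stepN hA hadm hm
    have := (hσ₀.bruhatLE_of_admissible hτ).lenPerm_le
    omega
  have hmem : lenPerm σ - lenPerm σ₀ ∈ {l | ∃ m, StepN l m (mOf A σ)} :=
    ⟨_, hσ₀.stepN_mOf hA hadm⟩
  exact le_antisymm (csSup_le ⟨_, hmem⟩ hub) (le_csSup ⟨_, hub⟩ hmem)

lemma Sigma0Spec.apu_and_obt_mOf_iff (hA : RegularBS A) (hσ₀ : Sigma0Spec A σ₀)
    {σ : Perm (Fin k)} (hσ : BruhatLE σ₀ σ) {n : Multisegment} :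
    APU n ∧ Obt n (mOf A σ) ↔ ∃ t, (IsTransposition t ∧ BruhatLE σ₀ (σ₀ * t) ∧
      BruhatLE (σ₀ * t) σ) ∧ mOf A (σ₀ * t) = n := by
  constructor
  · rintro ⟨⟨m, hpu, hstep⟩, hobt⟩
    obtain ⟨τ, hτ₀, hτσ, rfl⟩ := (hσ₀.obt_mOf_iff hA hσ).mp hobt
    obtain ⟨u, v, h, rfl⟩ := exists_isLinkedInversion_of_step hA hstep
    have hτ : τ * swap u v = σ₀ := by
      by_contra hne
      exact hσ₀.not_pairwiseUnlinked hA ((hσ₀.admissible_of_bruhatLE hτ₀).mul_swap h) hne hpu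
    obtain rfl : τ = σ₀ * swap u v := by rw [← hτ, mul_assoc, swap_mul_self, mul_one]
    exact ⟨swap u v, ⟨⟨u, v, h.1.ne, rfl⟩, hτ₀, hτσ⟩, rfl⟩
  · rintro ⟨t, ⟨ht, h₀, hσ'⟩, rfl⟩
    obtain ⟨u, v, huv, rfl⟩ := isTransposition_iff_exists_lt.mp ht
    have hσ₀uv : σ₀ u < σ₀ v := by
      refine (lt_or_gt_of_ne (σ₀.injective.ne huv.ne)).resolve_right fun h => ?_
      exact mul_swap_ne_self σ₀ huv.ne ((bruhatLE_mul_swap_of_lt σ₀ huv h).antisymm h₀)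
    have h : A.IsLinkedInversion (σ₀ * swap u v) u v :=
      ⟨huv, by simpa using hσ₀uv, by simpa using hσ₀.admissible (σ₀ v)⟩
    refine ⟨⟨mOf A σ₀, hσ₀.pairwiseUnlinked hA, ?_⟩, (hσ₀.obt_mOf_iff hA hσ).mpr ⟨_, h₀, hσ', rfl⟩⟩
    simpa [mul_assoc] using h.step hA

lemma Sigma0Spec.depth_mOf (hA : RegularBS A) (hσ₀ : Sigma0Spec A σ₀) {σ : Perm (Fin k)}
    (hσ : BruhatLE σ₀ σ) :
    depth (mOf A σ) =
      {t | IsTransposition t ∧ BruhatLE σ₀ (σ₀ * t) ∧ BruhatLE (σ₀ * t) σ}.ncard := by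
  rw [depth, show {n | APU n ∧ Obt n (mOf A σ)} = (fun t => mOf A (σ₀ * t)) ''
      {t | IsTransposition t ∧ BruhatLE σ₀ (σ₀ * t) ∧ BruhatLE (σ₀ * t) σ} from
    Set.ext fun n => hσ₀.apu_and_obt_mOf_iff hA hσ]
  refine Set.InjOn.ncard_image fun t₁ h₁ t₂ h₂ h => mul_left_cancel (a := σ₀) ?_
  exact mOf_inj_of_admissible hA (hσ₀.admissible_of_bruhatLE h₁.2.1)
    (hσ₀.admissible_of_bruhatLE h₂.2.1) h

end

theorem statement4 {k : ℕ} (A : BiSeq k) (hA : RegularBS A)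
    (σ0 σ : Equiv.Perm (Fin k)) (hσ0 : Sigma0Spec A σ0) (hle : BruhatLE σ0 σ) :
    depth (mOf A σ) =
      {t : Equiv.Perm (Fin k) | IsTransposition t ∧ BruhatLE σ0 (σ0 * t) ∧
        BruhatLE (σ0 * t) σ}.ncard ∧
    complexity (mOf A σ) = lenPerm σ - lenPerm σ0 ∧
    (IsBalanced (mOf A σ) ↔ SmoothPair σ0 σ) := by
  have hdepth := hσ0.depth_mOf hA hle
  have hcomplexity := hσ0.complexity_mOf hA hle
  have hlen := hle.lenPerm_le
  have hcount := ncard_transpositions_bruhatLE hle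
  refine ⟨hdepth, hcomplexity, ?_⟩
  rw [IsBalanced, SmoothPair, hdepth, hcomplexity]
  constructor
  · rintro ⟨-, h⟩
    exact ⟨hle, by omega⟩
  · rintro ⟨-, h⟩
    exact ⟨BiSeq.regular_mOf hA σ, by omega⟩
end

section
/- Let M ∈ M_k. Let ∼ be the equivalence relation on {1,…,k} generated by: i ∼ j whenever there exists l with M_{i,l} = M_{j,l} = 1. Let C_1,…,C_s be its equivalence classes and r = #{i : |C_i| > 1}. Then the set {(σ1,σ2) ∈ S_k × S_k : P_{σ1} + P_{σ2} = M} has cardinality 2^r, and moreover for every pair (σ1,σ2) with P_{σ1} + P_{σ2} = M, the orbits of the permutation σ2^{−1}σ1 on {1,…,k} are exactly the classes C_1,…,C_s. -/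
/-!
By König's theorem (Hall's marriage theorem, applied twice), `M = P_{τ₁} + P_{τ₂}` for some
permutations `τ₁, τ₂`. Row `i` of `M` is supported on `{τ₁ i, τ₂ i}`, so the generating relation
of `∼` joins `i` exactly to `σ i`, where `σ = τ₂⁻¹ τ₁`: the classes of `∼` are the cycles of `σ`,
whichever decomposition is used. Any decomposition `(σ₁, σ₂)` agrees with `(τ₁, τ₂)` row by row up
to a swap; the set of swapped rows is a union of nontrivial cycles of `σ`, and every such union `S`
is realised by `(τ₁ ρ⁻¹, τ₂ ρ)` with `ρ` the restriction of `σ` to `S`. So the decompositions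
correspond to the sets of nontrivial classes.
-/

open Finset

section Saturated

variable {α : Type*}

def IsSaturated (r : α → α → Prop) (S : Set α) : Prop :=
  ∀ ⦃x y⦄, r x y → x ∈ S → y ∈ S

lemma ncard_setOf_isSaturated [Finite α] {r : α → α → Prop} (hr : Equivalence r)
    (P : Set α → Prop) :
    {S : Set α | IsSaturated r S ∧ ∀ x ∈ S, P {y | r x y}}.ncard =
      2 ^ {C : Set α | (∃ x, C = {y | r x y}) ∧ P C}.ncard := by
  set T := {C : Set α | (∃ x, C = {y | r x y}) ∧ P C}
  have eq_of_mem {C} (hC : C ∈ T) {x} (hx : x ∈ C) : C = {y | r x y} := by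
    obtain ⟨⟨z, rfl⟩, -⟩ := hC
    exact Set.ext fun y => ⟨hr.trans (hr.symm hx), hr.trans hx⟩
  have subset_of_sUnion_subset {A B} (hA : A ⊆ T) (hB : B ⊆ T) (h : ⋃₀ A ⊆ ⋃₀ B) : A ⊆ B := by
    intro C hC
    obtain ⟨x, hx⟩ : C.Nonempty := by
      obtain ⟨⟨z, rfl⟩, -⟩ := hA hC
      exact ⟨z, hr.refl z⟩
    obtain ⟨C', hC', hxC'⟩ := h ⟨C, hC, hx⟩
    rwa [eq_of_mem (hA hC) hx, ← eq_of_mem (hB hC') hxC']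
  have image_sUnion :
      {S : Set α | IsSaturated r S ∧ ∀ x ∈ S, P {y | r x y}} = Set.sUnion '' 𝒫 T := by
    ext S
    constructor
    · rintro ⟨hsat, hP⟩
      refine ⟨{C ∈ T | C ⊆ S}, fun C hC => hC.1, ?_⟩
      refine (Set.sUnion_subset fun C hC => hC.2).antisymm fun x hx => ?_
      exact ⟨{y | r x y}, ⟨⟨⟨x, rfl⟩, hP x hx⟩, fun y hy => hsat hy hx⟩, hr.refl x⟩
    · rintro ⟨A, hA, rfl⟩
      refine ⟨fun x y hxy ⟨C, hC, hx⟩ => ⟨C, hC, ?_⟩, fun x ⟨C, hC, hx⟩ => ?_⟩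
      · rw [eq_of_mem (hA hC) hx]
        exact hxy
      · rw [← eq_of_mem (hA hC) hx]
        exact (hA hC).2
  rw [image_sUnion, Set.InjOn.ncard_image, Set.ncard_powerset]
  exact fun A hA B hB h =>
    (subset_of_sUnion_subset hA hB h.le).antisymm (subset_of_sUnion_subset hB hA h.ge)

end Saturated

def AgreeUpToSwap {α β : Type*} (τ₁ τ₂ σ₁ σ₂ : α → β) : Prop :=
  ∀ i, (σ₁ i = τ₁ i ∧ σ₂ i = τ₂ i) ∨ (σ₁ i = τ₂ i ∧ σ₂ i = τ₁ i)

namespace Equiv.Perm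

variable {α : Type*} {f : Perm α} {x y : α}

lemma SameCycle.rel_of_forall_rel_apply {r : α → α → Prop} (hr : Equivalence r)
    (h : ∀ x, r x (f x)) (hxy : f.SameCycle x y) : r x y := by
  obtain ⟨n, rfl⟩ := hxy
  induction n using Int.induction_on with
  | zero => exact hr.refl x
  | succ n ih =>
    rw [add_comm, zpow_add, zpow_one, mul_apply]
    exact hr.trans ih (h _)
  | pred n ih =>
    rw [sub_eq_add_neg, add_comm, zpow_add, zpow_neg_one, mul_apply]
    refine hr.trans ih (hr.symm ?_)
    simpa using h (f⁻¹ ((f ^ (-n : ℤ)) x))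

lemma one_lt_ncard_setOf_sameCycle_iff [Finite α] :
    1 < {y | f.SameCycle x y}.ncard ↔ f x ≠ x := by
  rw [Set.one_lt_ncard_iff]
  constructor
  · rintro ⟨a, b, ha, hb, hab⟩ hx
    exact hab ((SameCycle.eq_of_left ha hx).symm.trans (SameCycle.eq_of_left hb hx))
  · exact fun hx => ⟨x, f x, SameCycle.rfl, sameCycle_apply_right.mpr SameCycle.rfl, hx.symm⟩

lemma isSaturated_sameCycle_of_mapsTo [Finite α] {S : Set α}
    (h : Set.MapsTo f S S) : IsSaturated f.SameCycle S := by
  intro x y hxy hx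
  obtain ⟨n, -, rfl⟩ := hxy.exists_pow_eq'
  rw [coe_pow]
  exact h.iterate n hx

variable {τ₁ τ₂ σ₁ σ₂ : Perm α}

lemma apply_ne_self_of_agreeUpToSwap (h : AgreeUpToSwap τ₁ τ₂ σ₁ σ₂) {i : α}
    (hi : σ₁ i ≠ τ₁ i) : (τ₂⁻¹ * τ₁) i ≠ i := by
  rw [Ne, mul_apply, inv_eq_iff_eq]
  grind [AgreeUpToSwap]

lemma mapsTo_setOf_ne_of_agreeUpToSwap (h : AgreeUpToSwap τ₁ τ₂ σ₁ σ₂) :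
    Set.MapsTo (τ₂⁻¹ * τ₁) {i | σ₁ i ≠ τ₁ i} {i | σ₁ i ≠ τ₁ i} := by
  intro i hi
  -- A swap at `i` gives `σ₂ i = τ₁ i = τ₂ (σ i)`, so `σ₂` cannot also take the value `τ₂ (σ i)`
  -- at `σ i ≠ i`: the swap propagates along the cycle of `σ = τ₂⁻¹ * τ₁`.
  have hσ : τ₂ ((τ₂⁻¹ * τ₁) i) = τ₁ i := by simp
  have hfix := apply_ne_self_of_agreeUpToSwap h hi
  have hswap := h i
  have hswapσ := h ((τ₂⁻¹ * τ₁) i)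
  grind [EquivLike.apply_eq_iff_eq]

lemma eq_of_agreeUpToSwap {σ₁' σ₂' : Perm α} (h : AgreeUpToSwap τ₁ τ₂ σ₁ σ₂)
    (h' : AgreeUpToSwap τ₁ τ₂ σ₁' σ₂') (hS : ∀ i, σ₁ i = τ₁ i ↔ σ₁' i = τ₁ i) :
    σ₁ = σ₁' ∧ σ₂ = σ₂' := by
  refine ⟨ext fun i => ?_, ext fun i => ?_⟩ <;> grind [AgreeUpToSwap]

lemma exists_agreeUpToSwap_setOf_ne_eq {S : Set α}
    (hsat : IsSaturated (τ₂⁻¹ * τ₁).SameCycle S) (hfix : ∀ x ∈ S, (τ₂⁻¹ * τ₁) x ≠ x) :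
    ∃ σ₁ σ₂ : Perm α, AgreeUpToSwap τ₁ τ₂ σ₁ σ₂ ∧ {i | σ₁ i ≠ τ₁ i} = S := by
  classical
  set σ := τ₂⁻¹ * τ₁
  have hσ (x) : σ x ∈ S ↔ x ∈ S :=
    ⟨hsat (sameCycle_apply_left.mpr .rfl), hsat (sameCycle_apply_right.mpr .rfl)⟩
  have hσinv (x) : σ⁻¹ x ∈ S ↔ x ∈ S := by rw [← hσ, coe_inv, Equiv.apply_symm_apply]
  refine ⟨τ₁ * ofSubtype (σ⁻¹.subtypePerm hσinv), τ₂ * ofSubtype (σ.subtypePerm hσ), ?_, ?_⟩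
  · intro i
    by_cases hi : i ∈ S
    · right
      simp [ofSubtype_subtypePerm_of_mem _ hi, σ]
    · left
      simp [ofSubtype_subtypePerm_of_not_mem _ hi]
  · ext i
    by_cases hi : i ∈ S
    · have : σ⁻¹ i ≠ i := fun h => hfix i hi (inv_eq_iff_eq.mp h).symm
      simpa [ofSubtype_subtypePerm_of_mem _ hi, hi]
    · simp [ofSubtype_subtypePerm_of_not_mem _ hi, hi]

lemma ncard_setOf_agreeUpToSwap [Finite α] (τ₁ τ₂ : Perm α) :
    {p : Perm α × Perm α | AgreeUpToSwap τ₁ τ₂ p.1 p.2}.ncard =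
      {S : Set α | IsSaturated (τ₂⁻¹ * τ₁).SameCycle S ∧ ∀ x ∈ S, (τ₂⁻¹ * τ₁) x ≠ x}.ncard := by
  refine Set.ncard_congr (fun p _ => {i | p.1 i ≠ τ₁ i}) (fun p hp => ?_) (fun p q hp hq hpq => ?_)
    fun S ⟨hsat, hfix⟩ => ?_
  · exact ⟨isSaturated_sameCycle_of_mapsTo (mapsTo_setOf_ne_of_agreeUpToSwap hp),
      fun _ => apply_ne_self_of_agreeUpToSwap hp⟩
  · exact Prod.ext_iff.mpr
      (eq_of_agreeUpToSwap hp hq fun i => not_iff_not.mp (Set.ext_iff.mp hpq i))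
  · obtain ⟨σ₁, σ₂, h, hS⟩ := exists_agreeUpToSwap_setOf_ne_eq hsat hfix
    exact ⟨(σ₁, σ₂), h, hS⟩

end Equiv.Perm

section PermMat

variable {k : ℕ}

@[simp]
lemma sum_permMat_row (σ : Equiv.Perm (Fin k)) (i : Fin k) : ∑ j, PermMat σ i j = 1 := by
  simp [PermMat]

@[simp]
lemma sum_permMat_col (σ : Equiv.Perm (Fin k)) (j : Fin k) : ∑ i, PermMat σ i j = 1 := by
  simp [PermMat, ← σ.eq_symm_apply]

lemma exists_perm_forall_ne_zero {n : ℕ} (hn : n ≠ 0) (M : Matrix (Fin k) (Fin k) ℕ)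
    (hrow : ∀ i, ∑ j, M i j = n) (hcol : ∀ j, ∑ i, M i j = n) :
    ∃ σ : Equiv.Perm (Fin k), ∀ i, M i (σ i) ≠ 0 := by
  classical
  let support i : Finset (Fin k) := {j | M i j ≠ 0}
  have hall (s : Finset (Fin k)) : #s ≤ #(s.biUnion support) := by
    set B := s.biUnion support
    have hrowB (i) (hi : i ∈ s) : ∑ j ∈ B, M i j = n := by
      rw [← hrow i]
      refine sum_subset (subset_univ B) fun j _ hj => ?_
      by_contra hne
      exact hj (mem_biUnion.mpr ⟨i, hi, by simpa [support] using hne⟩)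
    refine le_of_mul_le_mul_left ?_ (Nat.pos_of_ne_zero hn)
    calc n * #s = ∑ i ∈ s, ∑ j ∈ B, M i j := by
          rw [sum_congr rfl hrowB, sum_const, smul_eq_mul, mul_comm]
      _ = ∑ j ∈ B, ∑ i ∈ s, M i j := sum_comm
      _ ≤ ∑ j ∈ B, ∑ i, M i j := sum_le_sum fun j _ => sum_le_sum_of_subset (subset_univ s)
      _ = n * #B := by rw [sum_congr rfl fun j _ => hcol j, sum_const, smul_eq_mul, mul_comm]
  obtain ⟨f, hf, hfM⟩ := (all_card_le_biUnion_card_iff_exists_injective support).mp hall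
  exact ⟨Equiv.ofBijective f hf.bijective_of_finite, fun i => by simpa [support] using hfM i⟩

lemma exists_sum_permMat_eq (n : ℕ) (M : Matrix (Fin k) (Fin k) ℕ)
    (hrow : ∀ i, ∑ j, M i j = n) (hcol : ∀ j, ∑ i, M i j = n) :
    ∃ σ : Fin n → Equiv.Perm (Fin k), ∑ t, PermMat (σ t) = M := by
  induction n generalizing M with
  | zero =>
    refine ⟨Fin.elim0, ?_⟩
    ext i j
    simpa using (sum_eq_zero_iff.mp (hrow i) j (mem_univ j)).symm
  | succ n ih =>
    obtain ⟨σ, hσ⟩ := exists_perm_forall_ne_zero n.succ_ne_zero M hrow hcol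
    have hle (i j) : PermMat σ i j ≤ M i j := by
      unfold PermMat
      split_ifs with h
      · exact Nat.one_le_iff_ne_zero.mpr (h ▸ hσ i)
      · exact Nat.zero_le _
    obtain ⟨τ, hτ⟩ := ih (M - PermMat σ)
      (fun i => by simp [Matrix.sub_apply, sum_tsub_distrib _ fun j _ => hle i j, hrow])
      (fun j => by simp [Matrix.sub_apply, sum_tsub_distrib _ fun i _ => hle i j, hcol])
    refine ⟨Fin.cons σ τ, ?_⟩
    ext i j
    simp only [Fin.sum_univ_succ, Fin.cons_zero, Fin.cons_succ, hτ, Matrix.add_apply,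
      Matrix.sub_apply]
    exact add_tsub_cancel_of_le (hle i j)

lemma exists_permMat_add_permMat_eq {M : Matrix (Fin k) (Fin k) ℕ}
    (hrow : ∀ i, ∑ j, M i j = 2) (hcol : ∀ j, ∑ i, M i j = 2) :
    ∃ τ₁ τ₂ : Equiv.Perm (Fin k), PermMat τ₁ + PermMat τ₂ = M := by
  obtain ⟨τ, hτ⟩ := exists_sum_permMat_eq 2 M hrow hcol
  exact ⟨τ 0, τ 1, by simpa [Fin.sum_univ_two] using hτ⟩

lemma ite_add_ite_eq_ite_add_ite_iff {α : Type*} [DecidableEq α] {a b c d : α} :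
    (∀ l, ((if a = l then 1 else 0) + (if b = l then 1 else 0) : ℕ) =
      (if c = l then 1 else 0) + (if d = l then 1 else 0)) ↔
    (a = c ∧ b = d) ∨ (a = d ∧ b = c) := by
  constructor
  · intro h
    have ha := h a; have hb := h b; have hc := h c
    by_cases hac : a = c
    · subst hac
      by_cases hdb : d = b <;> simp_all
    · by_cases hda : d = a
      · subst hda
        by_cases hbc : b = c <;> simp_all
      · simp [hda, Ne.symm hac] at ha
  · rintro (⟨rfl, rfl⟩ | ⟨rfl, rfl⟩) l <;> omega

lemma permMat_add_permMat_eq_iff {σ₁ σ₂ τ₁ τ₂ : Equiv.Perm (Fin k)} :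
    PermMat σ₁ + PermMat σ₂ = PermMat τ₁ + PermMat τ₂ ↔
      AgreeUpToSwap τ₁ τ₂ σ₁ σ₂ := by
  rw [← Matrix.ext_iff]
  exact forall_congr' fun i => ite_add_ite_eq_ite_add_ite_iff

lemma sameCycle_of_permMat_add_permMat_apply_eq_one {τ₁ τ₂ : Equiv.Perm (Fin k)} {i j l : Fin k}
    (hi : (PermMat τ₁ + PermMat τ₂) i l = 1) (hj : (PermMat τ₁ + PermMat τ₂) j l = 1) :
    (τ₂⁻¹ * τ₁).SameCycle i j := by
  have hsupp (x) (hx : (PermMat τ₁ + PermMat τ₂) x l = 1) : τ₁ x = l ∨ τ₂ x = l := by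
    simp only [Matrix.add_apply, PermMat] at hx
    split_ifs at hx <;> simp_all
  have hσ {x y} (hx : τ₁ x = l) (hy : τ₂ y = l) : (τ₂⁻¹ * τ₁) x = y := by
    rw [Equiv.Perm.mul_apply, hx, Equiv.Perm.inv_eq_iff_eq, hy]
  rcases hsupp i hi with hi | hi <;> rcases hsupp j hj with hj | hj
  · exact (τ₁.injective (hi.trans hj.symm)).sameCycle _
  · exact hσ hi hj ▸ Equiv.Perm.sameCycle_apply_right.mpr .rfl
  · exact (hσ hj hi ▸ Equiv.Perm.sameCycle_apply_right.mpr .rfl).symm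
  · exact (τ₂.injective (hi.trans hj.symm)).sameCycle _

lemma matRel_permMat_add_permMat_apply (τ₁ τ₂ : Equiv.Perm (Fin k)) (i : Fin k) :
    matRel (PermMat τ₁ + PermMat τ₂) i ((τ₂⁻¹ * τ₁) i) := by
  by_cases h : τ₁ i = τ₂ i
  · rw [Equiv.Perm.mul_apply, h, Equiv.Perm.inv_eq_iff_eq.mpr rfl]
    exact .refl i
  · refine .rel _ _ ⟨τ₁ i, ?_, ?_⟩ <;> simp [PermMat, h, Ne.symm h, Equiv.symm_apply_eq]

lemma matRel_permMat_add_permMat (τ₁ τ₂ : Equiv.Perm (Fin k)) :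
    matRel (PermMat τ₁ + PermMat τ₂) = (τ₂⁻¹ * τ₁).SameCycle := by
  ext i j
  constructor
  · intro h
    refine (Equiv.Perm.SameCycle.equivalence _).eqvGen_iff.mp (Relation.EqvGen.mono ?_ i j h)
    exact fun x y ⟨l, hx, hy⟩ => sameCycle_of_permMat_add_permMat_apply_eq_one hx hy
  · exact Equiv.Perm.SameCycle.rel_of_forall_rel_apply (Relation.EqvGen.is_equivalence _)
      (matRel_permMat_add_permMat_apply τ₁ τ₂)

end PermMat

theorem statement11_general {k : ℕ} (M : Matrix (Fin k) (Fin k) ℕ)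
    (hrow : ∀ i, ∑ j, M i j = 2) (hcol : ∀ j, ∑ i, M i j = 2) :
    {p : Equiv.Perm (Fin k) × Equiv.Perm (Fin k) | PermMat p.1 + PermMat p.2 = M}.ncard =
      2 ^ {C : Set (Fin k) | (∃ i, C = {j | matRel M i j}) ∧ 1 < C.ncard}.ncard ∧
    ∀ σ1 σ2 : Equiv.Perm (Fin k), PermMat σ1 + PermMat σ2 = M →
      ∀ i j : Fin k, (σ2⁻¹ * σ1).SameCycle i j ↔ matRel M i j := by
  obtain ⟨τ₁, τ₂, rfl⟩ := exists_permMat_add_permMat_eq hrow hcol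
  refine ⟨?_, fun σ₁ σ₂ h i j => by rw [← h, matRel_permMat_add_permMat]⟩
  have hdecomp : {p : Equiv.Perm (Fin k) × Equiv.Perm (Fin k) |
      PermMat p.1 + PermMat p.2 = PermMat τ₁ + PermMat τ₂} = {p | AgreeUpToSwap τ₁ τ₂ p.1 p.2} :=
    Set.ext fun _ => permMat_add_permMat_eq_iff
  rw [hdecomp, Equiv.Perm.ncard_setOf_agreeUpToSwap, matRel_permMat_add_permMat,
    ← ncard_setOf_isSaturated (Equiv.Perm.SameCycle.equivalence _)]
  simp_rw [Equiv.Perm.one_lt_ncard_setOf_sameCycle_iff]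

theorem statement11 {k : ℕ} (M : Matrix (Fin k) (Fin k) ℕ)
    (hent : ∀ i j, M i j ≤ 2)
    (hrow : ∀ i, ∑ j, M i j = 2) (hcol : ∀ j, ∑ i, M i j = 2) :
    {p : Equiv.Perm (Fin k) × Equiv.Perm (Fin k) | PermMat p.1 + PermMat p.2 = M}.ncard =
      2 ^ {C : Set (Fin k) | (∃ i, C = {j | matRel M i j}) ∧ 1 < C.ncard}.ncard ∧
    ∀ σ1 σ2 : Equiv.Perm (Fin k), PermMat σ1 + PermMat σ2 = M →
      ∀ i j : Fin k, (σ2⁻¹ * σ1).SameCycle i j ↔ matRel M i j :=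
  statement11_general M hrow hcol
end

section
/- Let k ≥ 4 and let σ1 ∈ S_k be given by σ1(1) = k, σ1(2) = 2, σ1(i) = k+2−i for 3 ≤ i ≤ k−1, and σ1(k) = 1. Suppose σ ∈ S_k satisfies σ ≤ σ1 in the Bruhat order and D(σ) ∪ D(σ^{−1}) ⊆ {2, k}. Then either σ = σ1 or σ is given by σ(1) = 2, σ(2) = 1, and σ(i) = k+3−i for 3 ≤ i ≤ k. -/
/-! `Dset σ ⊆ {2, k}` says (in 0-based positions) that `σ` is strictly decreasing on `{0, 1}`
and on `{2, …, k-1}`; the same holds for `σ⁻¹`. If also `σ 2 < σ 1`, then `σ` is decreasing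
throughout, so `σ 0, σ 1 ≥ 2` and `r_σ(1,1) = 0 < 1 = r_σ1(1,1)`, contradicting `σ ≤ σ1`.
Otherwise `σ 1 < σ 2`, and as `σ⁻¹` reverses the order of the values `≥ 2`, `σ 1 ≤ 1`. The runs
of `σ⁻¹` then fix `σ 0` (and, when `σ 1 = 1`, also `σ (k-1) = 0`), and what remains is a strictly
decreasing map between two intervals of equal length, hence the reversal: along a strictly
decreasing map, `i ↦ f i + i` is antitone.
-/

theorem Fin.val_add_val_le_of_strictAntiOn {k m : ℕ} {f : Fin k → Fin m} {s : Set (Fin k)}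
    (hf : StrictAntiOn f s) {i j : Fin k} (hij : i ≤ j) (hs : Set.Icc i j ⊆ s) :
    (f j : ℕ) + j ≤ f i + i := by
  have hi : i ∈ s := hs ⟨le_rfl, hij⟩
  have hj : j ∈ s := hs ⟨hij, le_rfl⟩
  have hcard : (Finset.Icc i j).card ≤ (Finset.Icc (f j) (f i)).card := by
    refine Finset.card_le_card_of_injOn f (fun x hx => ?_) (hf.injOn.mono (by simpa using hs))
    rw [Finset.coe_Icc] at hx
    exact Finset.mem_Icc.mpr
      ⟨hf.antitoneOn (hs hx) hj hx.2, hf.antitoneOn hi (hs hx) hx.1⟩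
  simp only [Fin.card_Icc] at hcard
  omega

theorem Fin.val_add_val_eq_of_strictAntiOn {k m : ℕ} {f : Fin k → Fin m} {s : Set (Fin k)}
    (hf : StrictAntiOn f s) {a b : Fin k} (hs : Set.Icc a b ⊆ s) {c : ℕ}
    (ha : (f a : ℕ) + a ≤ c) (hb : c ≤ (f b : ℕ) + b) {i : Fin k} (hi : i ∈ Set.Icc a b) :
    (f i : ℕ) + i = c := by
  have h₁ := Fin.val_add_val_le_of_strictAntiOn hf hi.1 (fun x hx => hs ⟨hx.1, hx.2.trans hi.2⟩)
  have h₂ := Fin.val_add_val_le_of_strictAntiOn hf hi.2 (fun x hx => hs ⟨hi.1.trans hx.1, hx.2⟩)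
  omega

theorem BruhatLE.exists_le_of_apply_le {k : ℕ} {σ τ : Equiv.Perm (Fin k)} (h : BruhatLE σ τ)
    {i j : Fin k} (hij : τ i ≤ j) : ∃ u ≤ i, σ u ≤ j := by
  have hτ : 0 < rankFn τ i j := Finset.card_pos.mpr ⟨i, by simp [hij]⟩
  obtain ⟨u, hu⟩ := Finset.card_pos.mp (hτ.trans_le (h i j))
  exact ⟨u, (Finset.mem_filter.mp hu).2⟩

namespace Equiv.Perm

variable {k m : ℕ} {σ : Perm (Fin k)}

theorem strictAntiOn_of_Dset_subset (h : Dset σ ⊆ {m, k}) {s : Set (Fin k)}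
    (hs : s.OrdConnected) (hsm : ∀ a ∈ s, ∀ b ∈ s, (b : ℕ) = a + 1 → (b : ℕ) ≠ m) :
    StrictAntiOn σ s := by
  refine strictAntiOn_of_succ_lt hs fun a ha has hsa => ?_
  set b := Order.succ a
  have hab : (b : ℕ) = a + 1 := (Nat.covBy_iff_add_one_eq.mp
    (Order.covBy_succ_of_not_isMax ha).coe_fin).symm
  by_contra hle
  have hlt : σ a < σ b :=
    lt_of_le_of_ne (not_lt.mp hle) (σ.injective.ne (Order.lt_succ_of_not_isMax ha).ne)
  have hmem : (b : ℕ) ∈ Dset σ := by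
    refine Or.inl ⟨by omega, b.isLt, ?_⟩
    have ha' : (⟨b - 1, by omega⟩ : Fin k) = a := Fin.ext (by simp [hab])
    simpa [ha'] using hlt
  rcases h hmem with hbm | hbk
  · exact hsm a has b hsa hab hbm
  · exact b.isLt.ne hbk

theorem strictAntiOn_lt_of_Dset_subset (h : Dset σ ⊆ {m, k}) :
    StrictAntiOn σ {i | (i : ℕ) < m} :=
  strictAntiOn_of_Dset_subset h ⟨fun _ _ _ hy _ hz => (Fin.le_def.mp hz.2).trans_lt hy⟩
    fun _ _ _ hb _ => hb.ne

theorem strictAntiOn_ge_of_Dset_subset (h : Dset σ ⊆ {m, k}) :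
    StrictAntiOn σ {i | m ≤ (i : ℕ)} :=
  strictAntiOn_of_Dset_subset h ⟨fun _ hx _ _ _ hz => hx.trans (Fin.le_def.mp hz.1)⟩
    fun a (ha : m ≤ (a : ℕ)) _ _ hab => by omega

theorem val_apply_ne {i j : Fin k} (h : (i : ℕ) ≠ j) : (σ i : ℕ) ≠ σ j :=
  fun e => h (congrArg Fin.val (σ.injective (Fin.ext e)))

theorem apply_eq_of_apply_one_eq_zero (hk : 3 ≤ k)
    (hσ : StrictAntiOn σ {i | 2 ≤ (i : ℕ)})
    (hσinv : σ⁻¹ ⟨1, by omega⟩ < σ⁻¹ ⟨0, by omega⟩) (h₁ : (σ ⟨1, by omega⟩ : ℕ) = 0) :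
    ∀ i : Fin k, (σ i : ℕ) + 1 =
      if (i : ℕ) + 1 = 1 then 2
      else if (i : ℕ) + 1 = 2 then 1
      else k + 3 - ((i : ℕ) + 1) := by
  have h₀ : (σ ⟨0, by omega⟩ : ℕ) = 1 := by
    have hinv₀ : σ⁻¹ ⟨0, by omega⟩ = ⟨1, by omega⟩ := inv_eq_iff_eq.mpr (Fin.ext h₁.symm)
    rw [hinv₀] at hσinv
    have hinv₁ : σ⁻¹ ⟨1, by omega⟩ = ⟨0, by omega⟩ := Fin.ext (by simpa [Fin.lt_def] using hσinv)
    rw [← inv_eq_iff_eq.mp hinv₁]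
  have hrest (i : Fin k) (hi : 2 ≤ (i : ℕ)) : (σ i : ℕ) + i = k + 1 := by
    refine Fin.val_add_val_eq_of_strictAntiOn hσ (a := ⟨2, by omega⟩) (b := ⟨k - 1, by omega⟩)
      (fun x hx => Fin.le_def.mp hx.1) ?_ ?_ ⟨Fin.le_def.mpr hi, Fin.le_def.mpr (by simp; omega)⟩
    · have := (σ ⟨2, by omega⟩).isLt
      simp only
      omega
    · have h0 := σ.val_apply_ne (i := ⟨k - 1, by omega⟩) (j := ⟨0, by omega⟩) (by simp; omega)
      have h1 := σ.val_apply_ne (i := ⟨k - 1, by omega⟩) (j := ⟨1, by omega⟩) (by simp; omega)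
      simp only
      omega
  rintro ⟨i, hi⟩
  have := hrest ⟨i, hi⟩
  dsimp only at this ⊢
  rcases (by omega : i = 0 ∨ i = 1 ∨ 2 ≤ i) with rfl | rfl | h2
  all_goals split_ifs <;> omega

theorem eq_of_apply_one_eq_one (hk : 4 ≤ k)
    (hσ : StrictAntiOn σ {i | 2 ≤ (i : ℕ)}) (hσinv : StrictAntiOn ⇑σ⁻¹ {v | 2 ≤ (v : ℕ)})
    (hσ₀ : σ ⟨1, by omega⟩ < σ ⟨0, by omega⟩) (hσinv₀ : σ⁻¹ ⟨1, by omega⟩ < σ⁻¹ ⟨0, by omega⟩)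
    (h₁ : (σ ⟨1, by omega⟩ : ℕ) = 1) {τ : Perm (Fin k)}
    (hτ : ∀ i : Fin k, (τ i : ℕ) + 1 =
      if (i : ℕ) + 1 = 1 then k
      else if (i : ℕ) + 1 = 2 then 2
      else if (i : ℕ) + 1 = k then 1
      else k + 2 - ((i : ℕ) + 1)) :
    σ = τ := by
  have hlast : (σ ⟨k - 1, by omega⟩ : ℕ) = 0 := by
    have hinv₁ : σ⁻¹ ⟨1, by omega⟩ = ⟨1, by omega⟩ := inv_eq_iff_eq.mpr (Fin.ext h₁.symm)
    rw [hinv₁] at hσinv₀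
    have hp := Fin.val_add_val_le_of_strictAntiOn hσ (j := ⟨k - 1, by omega⟩)
      (Fin.le_def.mpr (by simp only; omega)) (fun x hx => (Fin.lt_def.mp hσinv₀).trans_le hx.1)
    simp only [coe_inv, Equiv.apply_symm_apply] at hp
    omega
  have hfirst : (σ ⟨0, by omega⟩ : ℕ) = k - 1 := by
    have h₀ : 1 < (σ ⟨0, by omega⟩ : ℕ) := h₁ ▸ hσ₀
    have hv := Fin.val_add_val_le_of_strictAntiOn hσinv (j := ⟨k - 1, by omega⟩)
      (Fin.le_def.mpr (by simp only; omega)) (fun x hx => h₀.trans_le hx.1)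
    simp only [coe_inv, Equiv.symm_apply_apply] at hv
    have := (σ ⟨0, by omega⟩).isLt
    omega
  have hmid (i : Fin k) (hi : 2 ≤ (i : ℕ)) (hi' : (i : ℕ) ≤ k - 2) : (σ i : ℕ) + i = k := by
    refine Fin.val_add_val_eq_of_strictAntiOn hσ (a := ⟨2, by omega⟩) (b := ⟨k - 2, by omega⟩)
      (fun x hx => Fin.le_def.mp hx.1) ?_ ?_ ⟨Fin.le_def.mpr hi, Fin.le_def.mpr hi'⟩
    · have h0 := σ.val_apply_ne (i := ⟨2, by omega⟩) (j := ⟨0, by omega⟩) (by simp)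
      have := (σ ⟨2, by omega⟩).isLt
      simp only
      omega
    · have h0 := σ.val_apply_ne (i := ⟨k - 2, by omega⟩) (j := ⟨k - 1, by omega⟩) (by simp; omega)
      have h1 := σ.val_apply_ne (i := ⟨k - 2, by omega⟩) (j := ⟨1, by omega⟩) (by simp; omega)
      simp only
      omega
  ext ⟨i, hi⟩
  have := hτ ⟨i, hi⟩
  have := hmid ⟨i, hi⟩
  dsimp only at *
  rcases (by omega : i = 0 ∨ i = 1 ∨ (2 ≤ i ∧ i ≤ k - 2) ∨ i = k - 1)
    with rfl | rfl | ⟨h2, h2'⟩ | rfl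
  all_goals split_ifs at * <;> omega

end Equiv.Perm

theorem statement12 (k : ℕ) (hk : 4 ≤ k) (σ1 σ : Equiv.Perm (Fin k))
    (hσ1 : ∀ i : Fin k, (σ1 i : ℕ) + 1 =
      if (i : ℕ) + 1 = 1 then k
      else if (i : ℕ) + 1 = 2 then 2
      else if (i : ℕ) + 1 = k then 1
      else k + 2 - ((i : ℕ) + 1))
    (hle : BruhatLE σ σ1)
    (hD : Dset σ ∪ Dset σ⁻¹ ⊆ ({2, k} : Set ℕ)) :
    σ = σ1 ∨ ∀ i : Fin k, (σ i : ℕ) + 1 =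
      if (i : ℕ) + 1 = 1 then 2
      else if (i : ℕ) + 1 = 2 then 1
      else k + 3 - ((i : ℕ) + 1) := by
  have hDσ : Dset σ ⊆ {2, k} := fun i hi => hD (Or.inl hi)
  have hDσinv : Dset σ⁻¹ ⊆ {2, k} := fun i hi => hD (Or.inr hi)
  have hσ := Equiv.Perm.strictAntiOn_ge_of_Dset_subset hDσ
  have hσinv := Equiv.Perm.strictAntiOn_ge_of_Dset_subset hDσinv
  have hσ₀ : σ ⟨1, by omega⟩ < σ ⟨0, by omega⟩ :=
    Equiv.Perm.strictAntiOn_lt_of_Dset_subset hDσ (by simp) (by simp) (by simp)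
  have hσinv₀ : σ⁻¹ ⟨1, by omega⟩ < σ⁻¹ ⟨0, by omega⟩ :=
    Equiv.Perm.strictAntiOn_lt_of_Dset_subset hDσinv (by simp) (by simp) (by simp)
  rcases (σ.val_apply_ne (i := ⟨1, by omega⟩) (j := ⟨2, by omega⟩) (by simp)).lt_or_gt
    with h12 | h21
  · have h₁ : (σ ⟨1, by omega⟩ : ℕ) ≤ 1 := by
      by_contra h
      have := hσinv (not_le.mp h) ((not_le.mp h).trans h12) h12
      simp [Fin.lt_def] at this
    rcases Nat.le_one_iff_eq_zero_or_eq_one.mp h₁ with h | h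
    · exact Or.inr (Equiv.Perm.apply_eq_of_apply_one_eq_zero (by omega) hσ hσinv₀ h)
    · exact Or.inl (Equiv.Perm.eq_of_apply_one_eq_one hk hσ hσinv hσ₀ hσinv₀ h hσ1)
  · obtain ⟨⟨u, hu'⟩, hu, hσu⟩ := hle.exists_le_of_apply_le (i := ⟨1, by omega⟩)
      (j := ⟨1, by omega⟩) (Fin.le_of_eq (Fin.ext (by simpa using hσ1 ⟨1, by omega⟩)))
    have h32 : σ ⟨3, by omega⟩ < σ ⟨2, by omega⟩ := hσ (by simp) (by simp) (by simp [Fin.lt_def])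
    simp only [Fin.le_def, Fin.lt_def] at hu hσu h32 hσ₀
    obtain rfl | rfl : u = 0 ∨ u = 1 := by omega
    all_goals omega
end

section
/- Let k > l > 2 and let σ1 ∈ S_k be given by σ1(1) = l, σ1(i) = l−i for 2 ≤ i ≤ l−2, σ1(l−1) = k, σ1(l) = 1, σ1(i) = l+k−i for l+1 ≤ i ≤ k−1, and σ1(k) = l−1. Suppose σ ∈ S_k satisfies σ ≤ σ1 in the Bruhat order and D(σ) ∪ D(σ^{−1}) ⊆ {l−2, l, k}. Then σ is one of the following four permutations: (i) σ = σ1; (ii) σ(1) = l, σ(i) = l−i for 2 ≤ i ≤ l−2, σ(l−1) = l−1, σ(l) = 1, σ(i) = k+l+1−i for l+1 ≤ i ≤ k; (iii) σ(i) = l−1−i for 1 ≤ i ≤ l−2, σ(l−1) = k, σ(l) = l, σ(i) = k+l−i for l+1 ≤ i ≤ k−1, σ(k) = l−1; (iv) σ(i) = l−1−i for 1 ≤ i ≤ l−2, σ(l−1) = l, σ(l) = l−1, σ(i) = k+l+1−i for l+1 ≤ i ≤ k. -/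
/-!
Work with `σ` as a permutation `π` of `ℕ` fixing every `n ≥ k`, with 0-based positions.
The ascent condition makes `π` decreasing on the position blocks `[0, l-3]`, `{l-2, l-1}`,
`[l, k-1]` and `π⁻¹` decreasing on the same blocks of values. Four rank inequalities from
`σ ≤ σ₁` give `π 0 ≤ l-1`, `π⁻¹ [0, l-3] ⊆ [0, l-1]`, and at most one position in `[0, l-1]`
(resp. `[0, l-3]`) whose value exceeds `l-1` (resp. `l-3`).

If `π 0 ≤ l-3`, then `π` reverses `[0, l-3]` and `π (l-1) ∈ {l-2, l-1}` decides between (iv)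
and (iii). Otherwise a pigeonhole count forces `π (l-2) ≥ l-2`, then `π⁻¹` reverses `[1, l-3]`
into itself with `π (l-1) = 0`, `π 0 = l-1`, and `π (l-2) = l-2` or `π (l-2) ≥ l` decides between
(ii) and (i). In each case `π` preserves the set of positions already placed, so on the last
block it is the reversal of `[l, k-1]`, or, when `π (l-2) ≥ l`, the reversal of `[l, k-2]` with
`π (l-2) = k-1` and `π (k-1) = l-2`.
-/

open Equiv Finset

-- The permutations σ₁ and (ii)–(iv) in the paper's 1-based one-line notation: position `m`
-- carries the value `sigmaOne k l m`, etc.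
def sigmaOne (k l m : ℕ) : ℕ :=
  if m = 1 then l
  else if m ≤ l - 2 then l - m
  else if m = l - 1 then k
  else if m = l then 1
  else if m = k then l - 1
  else l + k - m

def sigmaTwo (k l m : ℕ) : ℕ :=
  if m = 1 then l
  else if m ≤ l - 2 then l - m
  else if m = l - 1 then l - 1
  else if m = l then 1
  else k + l + 1 - m

def sigmaThree (k l m : ℕ) : ℕ :=
  if m ≤ l - 2 then l - 1 - m
  else if m = l - 1 then k
  else if m = l then l
  else if m = k then l - 1
  else k + l - m

def sigmaFour (k l m : ℕ) : ℕ :=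
  if m ≤ l - 2 then l - 1 - m
  else if m = l - 1 then l
  else if m = l then l - 1
  else k + l + 1 - m

namespace StrictAntiOn

variable {f : ℕ → ℕ} {a b : ℕ}

theorem add_sub_le (hf : StrictAntiOn f (Set.Icc a b)) {i j : ℕ} (hai : a ≤ i) (hij : i ≤ j)
    (hjb : j ≤ b) : f j + (j - i) ≤ f i := by
  induction j, hij using Nat.le_induction with
  | base => simp
  | succ j hij ih =>
    have hstep := hf ⟨by omega, by omega⟩ ⟨by omega, hjb⟩ (Nat.lt_add_one j)
    have := ih (by omega)
    omega

theorem apply_eq_of_endpoints (hf : StrictAntiOn f (Set.Icc a b)) {c : ℕ} (hb : c ≤ f b)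
    (ha : f a ≤ c + (b - a)) {i : ℕ} (hi : i ∈ Set.Icc a b) : f i = c + (b - i) := by
  obtain ⟨hai, hib⟩ := hi
  have := hf.add_sub_le hai hib le_rfl
  have := hf.add_sub_le le_rfl hai hib
  omega

end StrictAntiOn

theorem strictAntiOn_Icc_of_lt_pred {f : ℕ → ℕ} {a b : ℕ}
    (h : ∀ i, a < i → i ≤ b → f i < f (i - 1)) : StrictAntiOn f (Set.Icc a b) :=
  strictAntiOn_of_lt_pred Set.ordConnected_Icc fun i hmin hi hpi => by
    have hi0 : i ≠ 0 := by rintro rfl; exact hmin isMin_bot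
    simp only [Order.pred_eq_sub_one, Set.mem_Icc] at hi hpi ⊢
    exact h i (by omega) hi.2

theorem Equiv.Perm.apply_mem_iff_of_mapsTo {α : Type*} (π : Perm α) {s : Finset α}
    (h : ∀ x ∈ s, π x ∈ s) (x : α) : π x ∈ s ↔ x ∈ s := by
  have hmap : s.map π.toEmbedding = s :=
    map_eq_of_subset fun y hy => by
      obtain ⟨x, hx, rfl⟩ := mem_map.mp hy
      exact h x hx
  refine ⟨fun hx => ?_, h x⟩
  rw [← hmap] at hx
  obtain ⟨y, hy, hyx⟩ := mem_map.mp hx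
  rwa [← π.injective hyx]

def natRank (π : Perm ℕ) (i j : ℕ) : ℕ := #{u ∈ range (i + 1) | π u ≤ j}

section natRank

variable {π : Perm ℕ} {i j : ℕ}

theorem natRank_add_card_lt (π : Perm ℕ) (i j : ℕ) :
    natRank π i j + #{u ∈ range (i + 1) | j < π u} = i + 1 := by
  simp_rw [natRank, ← not_le]
  rw [card_filter_add_card_filter_not, card_range]

theorem card_le_natRank {s : Finset ℕ} (hs : ∀ u ∈ s, u ≤ i ∧ π u ≤ j) : #s ≤ natRank π i j :=
  card_le_card fun u hu => by
    simp only [mem_filter, mem_range]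
    exact ⟨Nat.lt_succ_of_le (hs u hu).1, (hs u hu).2⟩

theorem apply_le_of_lt_natRank (h : i < natRank π i j) {u : ℕ} (hu : u ≤ i) : π u ≤ j := by
  by_contra hlt
  have hpos : 0 < #{u ∈ range (i + 1) | j < π u} :=
    card_pos.mpr ⟨u, by simp only [mem_filter, mem_range]; omega⟩
  have := natRank_add_card_lt π i j
  omega

theorem eq_of_le_natRank (h : i ≤ natRank π i j) {u u' : ℕ} (hu : u ≤ i) (hu' : u' ≤ i)
    (hlt : j < π u) (hlt' : j < π u') : u = u' := by
  have hcard : #{u ∈ range (i + 1) | j < π u} ≤ 1 := by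
    have := natRank_add_card_lt π i j
    omega
  exact card_le_one.mp hcard u (by simp only [mem_filter, mem_range]; omega) u'
    (by simp only [mem_filter, mem_range]; omega)

theorem natRank_inv (π : Perm ℕ) (i j : ℕ) : natRank π⁻¹ j i = natRank π i j := by
  refine card_nbij' ⇑π⁻¹ ⇑π (fun v hv => ?_) (fun u hu => ?_) (fun v _ => by simp)
    (fun u _ => by simp)
  · simp only [Perm.coe_inv, coe_filter, mem_range, Set.mem_ofPred_eq, apply_symm_apply] at hv ⊢
    omega
  · simp only [Perm.coe_inv, coe_filter, mem_range, Set.mem_ofPred_eq, symm_apply_apply] at hu ⊢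
    omega

end natRank

def toNatPerm {k : ℕ} (σ : Perm (Fin k)) : Perm ℕ := σ.extendDomain Fin.equivSubtype

section toNatPerm

variable {k : ℕ} (σ : Perm (Fin k))

theorem toNatPerm_apply_of_lt {n : ℕ} (h : n < k) : toNatPerm σ n = σ ⟨n, h⟩ := by
  rw [toNatPerm, Perm.extendDomain_apply_subtype _ _ (b := n) h]
  rfl

@[simp]
theorem toNatPerm_apply_val (i : Fin k) : toNatPerm σ i = σ i :=
  toNatPerm_apply_of_lt σ i.2

theorem val_apply_add_one_eq {F : ℕ → ℕ} (h : ∀ i < k, toNatPerm σ i + 1 = F (i + 1))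
    (i : Fin k) : (σ i : ℕ) + 1 = F (i + 1) := by
  simpa using h i i.2

theorem toNatPerm_lt_iff (n : ℕ) : toNatPerm σ n < k ↔ n < k := by
  by_cases h : n < k
  · simp [toNatPerm_apply_of_lt σ h, h]
  · rw [toNatPerm, Perm.extendDomain_apply_not_subtype _ _ (b := n) h]

theorem toNatPerm_inv : (toNatPerm σ)⁻¹ = toNatPerm σ⁻¹ :=
  Perm.extendDomain_inv _ _

theorem rankFn_eq_natRank (i j : Fin k) : rankFn σ i j = natRank (toNatPerm σ) i j := by
  refine card_bij (fun u _ => (u : ℕ)) (fun u hu => ?_) (fun u _ v _ h => Fin.ext h)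
    (fun n hn => ?_)
  · simp only [mem_filter, mem_univ, true_and, mem_range, Order.lt_add_one_iff, Fin.val_fin_le,
      toNatPerm_apply_val] at hu ⊢
    exact hu
  · simp only [mem_filter, mem_range, Order.lt_add_one_iff, mem_univ, true_and, exists_prop] at hn ⊢
    refine ⟨⟨n, by omega⟩, ⟨hn.1, ?_⟩, rfl⟩
    simpa [toNatPerm_apply_of_lt σ (show n < k by omega)] using hn.2

theorem natRank_le_of_bruhatLE {τ : Perm (Fin k)} (h : BruhatLE τ σ) {i j : ℕ} (hi : i < k)
    (hj : j < k) : natRank (toNatPerm σ) i j ≤ natRank (toNatPerm τ) i j := by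
  simpa only [rankFn_eq_natRank] using h ⟨i, hi⟩ ⟨j, hj⟩

theorem toNatPerm_lt_pred_of_notMem_Dset {i : ℕ} (h0 : 0 < i) (hik : i < k)
    (hi : i ∉ Dset σ) : toNatPerm σ i < toNatPerm σ (i - 1) := by
  have hne : toNatPerm σ i ≠ toNatPerm σ (i - 1) := fun h => by
    have := (toNatPerm σ).injective h
    omega
  have hnlt : ¬ toNatPerm σ (i - 1) < toNatPerm σ i := fun hlt => hi <| Or.inl
    ⟨h0, hik, by rwa [toNatPerm_apply_of_lt σ hik, toNatPerm_apply_of_lt σ (by omega)] at hlt⟩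
  omega

end toNatPerm

-- The ascents allowed by `D(σ) ⊆ {l-2, l, k}` separate these three 0-based blocks.
def AntiOnBlocks (k l : ℕ) (f : ℕ → ℕ) : Prop :=
  StrictAntiOn f (Set.Icc 0 (l - 3)) ∧ StrictAntiOn f (Set.Icc (l - 2) (l - 1)) ∧
    StrictAntiOn f (Set.Icc l (k - 1))

theorem antiOnBlocks_of_Dset_subset {k l : ℕ} (σ : Perm (Fin k)) (hk : l ≤ k)
    (hD : Dset σ ⊆ {l - 2, l, k}) : AntiOnBlocks k l (toNatPerm σ) := by
  have hdesc : ∀ i, 0 < i → i < k → i ≠ l - 2 → i ≠ l →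
      toNatPerm σ i < toNatPerm σ (i - 1) := fun i h0 hik h1 h2 =>
    toNatPerm_lt_pred_of_notMem_Dset σ h0 hik fun hi => by
      have := hD hi
      simp only [Set.mem_insert_iff, Set.mem_singleton_iff] at this
      omega
  refine ⟨?_, ?_, ?_⟩ <;>
    exact strictAntiOn_Icc_of_lt_pred fun i _ _ => hdesc i (by omega) (by omega) (by omega) (by omega)

theorem natRank_lower_bounds_of_sigmaOne {k l : ℕ} {π₁ : Perm ℕ} (hl : 2 < l) (hk : l < k)
    (hπ₁ : ∀ i < k, π₁ i + 1 = sigmaOne k l (i + 1)) :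
    1 ≤ natRank π₁ 0 (l - 1) ∧ l - 2 ≤ natRank π₁ (l - 1) (l - 3) ∧
      l - 1 ≤ natRank π₁ (l - 1) (l - 1) ∧ l - 3 ≤ natRank π₁ (l - 3) (l - 3) := by
  have hval : ∀ u ≤ l - 1, u ≠ l - 2 → π₁ u ≤ l - 1 ∧ (u ≠ 0 → π₁ u ≤ l - 3) := by
    intro u hu hu'
    have := hπ₁ u (by omega)
    simp only [sigmaOne] at this
    split_ifs at this <;> omega
  refine ⟨?_, ?_, ?_, ?_⟩
  · simpa using card_le_natRank (π := π₁) (i := 0) (j := l - 1) (s := {0})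
      (by simpa using (hval 0 (by omega) (by omega)).1)
  · have := card_le_natRank (π := π₁) (i := l - 1) (j := l - 3) (s := (Icc 1 (l - 1)).erase (l - 2))
      fun u hu => by
        simp only [mem_erase, mem_Icc] at hu
        exact ⟨hu.2.2, (hval u hu.2.2 hu.1).2 (by omega)⟩
    rwa [card_erase_of_mem (by simp; omega), Nat.card_Icc] at this
  · have := card_le_natRank (π := π₁) (i := l - 1) (j := l - 1) (s := (range l).erase (l - 2))
      fun u hu => by
        simp only [mem_erase, mem_range] at hu
        exact ⟨by omega, (hval u (by omega) hu.1).1⟩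
    rwa [card_erase_of_mem (by simp; omega), card_range] at this
  · have := card_le_natRank (π := π₁) (i := l - 3) (j := l - 3) (s := Icc 1 (l - 3))
      fun u hu => by
        simp only [mem_Icc] at hu
        exact ⟨hu.2, (hval u (by omega) (by omega)).2 (by omega)⟩
    rwa [Nat.card_Icc] at this

section Classification

variable {k l : ℕ} {π : Perm ℕ}

theorem tail_of_preserves_Iio (hk : l < k) (hπk : ∀ n, π n < k ↔ n < k)
    (hanti : StrictAntiOn π (Set.Icc l (k - 1))) (hS : ∀ i < l, π i < l) :
    ∀ i, l ≤ i → i < k → π i = k + l - 1 - i := by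
  have hge : ∀ i, l ≤ i → l ≤ π i := fun i hi => by
    have := π.apply_mem_iff_of_mapsTo (s := range l) (by simpa using hS) i
    simp only [mem_range] at this
    omega
  intro i hi hik
  have := hanti.apply_eq_of_endpoints (c := l) (hge _ (by omega))
    (by have := (hπk l).2 hk; omega) ⟨hi, by omega⟩
  omega

theorem tail_of_preserves_Iio_insert (hl : 2 < l) (hk : l < k) (hπk : ∀ n, π n < k ↔ n < k)
    (hP : StrictAntiOn π (Set.Icc l (k - 1))) (hQ : StrictAntiOn ⇑π⁻¹ (Set.Icc l (k - 1)))
    (hS : ∀ i, i < l - 2 ∨ i = l - 1 → π i < l - 2 ∨ π i = l - 1) (hmid : l ≤ π (l - 2)) :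
    π (l - 2) = k - 1 ∧ π (k - 1) = l - 2 ∧ ∀ i, l ≤ i → i < k - 1 → π i = k + l - 2 - i := by
  have hS' : ∀ n, π n < l - 2 ∨ π n = l - 1 ↔ n < l - 2 ∨ n = l - 1 := fun n => by
    have := π.apply_mem_iff_of_mapsTo (s := insert (l - 1) (range (l - 2)))
      (by simpa [or_comm] using hS) n
    simpa [or_comm] using this
  have hQS : ∀ v, π⁻¹ v < l - 2 ∨ π⁻¹ v = l - 1 ↔ v < l - 2 ∨ v = l - 1 := fun v => by
    simpa using (hS' (π⁻¹ v)).symm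
  have hPk : ∀ n < k, π n < k := fun n => (hπk n).2
  have hQk : ∀ v < k, π⁻¹ v < k := fun v hv => by
    rw [← hπk]
    simpa using hv
  have htop : π (l - 2) = k - 1 := by
    -- otherwise `π⁻¹ (v + 1) ≥ l - 2 = π⁻¹ v` for `v = π (l - 2)`, both in the last block
    obtain ⟨v, hv⟩ : ∃ v, π (l - 2) = v := ⟨_, rfl⟩
    by_contra hne
    have hQv : π⁻¹ v = l - 2 := by rw [← hv]; simp
    have hvk := hPk (l - 2) (by omega)
    have hdesc := hQ ⟨by omega, by omega⟩ ⟨by omega, by omega⟩ (Nat.lt_add_one v)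
    have hv₁ := hQS (v + 1)
    omega
  have hbot : π (k - 1) = l - 2 := by
    obtain ⟨p, hp⟩ : ∃ p, π⁻¹ (l - 2) = p := ⟨_, rfl⟩
    have hπp : π p = l - 2 := by rw [← hp]; simp
    have hpS := hS' p
    have hpmid : p ≠ l - 2 := by rintro rfl; omega
    have hpk := hQk (l - 2) (by omega)
    by_contra hne
    have hplast : p ≠ k - 1 := by rintro rfl; exact hne hπp
    have hdesc := hP ⟨by omega, by omega⟩ ⟨by omega, by omega⟩ (Nat.lt_add_one p)
    have hp₁ := hS' (p + 1)
    omega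
  refine ⟨htop, hbot, fun i hi hik => ?_⟩
  have hrange : ∀ j, l ≤ j → j < k - 1 → l ≤ π j ∧ π j < k - 1 := fun j hj hjk => by
    have hjS := hS' j
    have hne₁ := π.injective.ne (show j ≠ k - 1 by omega)
    have hne₂ := π.injective.ne (show j ≠ l - 2 by omega)
    have hjk := hPk j (by omega)
    omega
  have := (hP.mono (Set.Icc_subset_Icc le_rfl (by omega))).apply_eq_of_endpoints
    (a := l) (b := k - 2) (c := l) (hrange (k - 2) (by omega) (by omega)).1
    (by have := (hrange l le_rfl (by omega)).2; omega) ⟨hi, by omega⟩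
  omega

theorem sigmaThree_or_sigmaFour (hl : 2 < l) (hk : l < k) (hπk : ∀ n, π n < k ↔ n < k)
    (hπ : AntiOnBlocks k l π) (hπ' : AntiOnBlocks k l ⇑π⁻¹) (hc : π (l - 1) ≤ l - 1)
    (hA : π 0 ≤ l - 3) :
    (∀ i < k, π i + 1 = sigmaThree k l (i + 1)) ∨ (∀ i < k, π i + 1 = sigmaFour k l (i + 1)) := by
  have hfirst : ∀ i ≤ l - 3, π i = l - 3 - i := fun i hi => by
    have := hπ.1.apply_eq_of_endpoints (c := 0) (Nat.zero_le _) (by omega) ⟨Nat.zero_le i, hi⟩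
    omega
  have hS : ∀ n, π n < l - 2 ↔ n < l - 2 := fun n => by
    have := π.apply_mem_iff_of_mapsTo (s := range (l - 2)) (fun i hi => by
      simp only [mem_range] at hi ⊢
      have := hfirst i (by omega)
      omega) n
    simpa using this
  have hlast : l - 2 ≤ π (l - 1) := by
    have := hS (l - 1)
    omega
  have hdesc : π (l - 1) < π (l - 2) := hπ.2.1 ⟨le_rfl, by omega⟩ ⟨by omega, le_rfl⟩ (by omega)
  rcases (show π (l - 1) = l - 2 ∨ π (l - 1) = l - 1 by omega) with hlast | hlast
  · right
    have hQ : π⁻¹ (l - 1) = l - 2 := by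
      have hQmid : π⁻¹ (l - 2) = l - 1 := by rw [← hlast]; simp
      have hdesc' := hπ'.2.1 ⟨le_rfl, by omega⟩ ⟨by omega, le_rfl⟩ (by omega : l - 2 < l - 1)
      have hge : ¬ π⁻¹ (l - 1) < l - 2 := fun h => by
        have := (hS _).2 h
        simp only [Perm.coe_inv, apply_symm_apply] at this
        omega
      omega
    have hmid : π (l - 2) = l - 1 := by rw [← hQ]; simp
    have htail := tail_of_preserves_Iio hk hπk hπ.2.2 fun i hi => by
      rcases (show i ≤ l - 3 ∨ i = l - 2 ∨ i = l - 1 by omega) with h | rfl | rfl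
      · have := hfirst i h
        omega
      all_goals omega
    intro i hi
    rcases (show i ≤ l - 3 ∨ i = l - 2 ∨ i = l - 1 ∨ l ≤ i by omega) with h | rfl | rfl | h
      <;> [rw [hfirst i h]; rw [hmid]; rw [hlast]; rw [htail i h hi]]
      <;> simp only [sigmaFour] <;> split_ifs <;> omega
  · left
    obtain ⟨htop, hbot, hmid⟩ := tail_of_preserves_Iio_insert hl hk hπk hπ.2.2 hπ'.2.2
      (by
        rintro i (hi | rfl)
        · have := hfirst i (by omega)
          omega
        · omega)
      (by omega)
    intro i hi
    rcases (show i ≤ l - 3 ∨ i = l - 2 ∨ i = l - 1 ∨ i = k - 1 ∨ l ≤ i ∧ i < k - 1 by omega)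
      with h | rfl | rfl | rfl | h
      <;> [rw [hfirst i h]; rw [htop]; rw [hlast]; rw [hbot]; rw [hmid i h.1 h.2]]
      <;> simp only [sigmaThree] <;> split_ifs <;> omega

theorem sigmaOne_or_sigmaTwo (hl : 2 < l) (hk : l < k) (hπk : ∀ n, π n < k ↔ n < k)
    (hπ : AntiOnBlocks k l π) (hπ' : AntiOnBlocks k l ⇑π⁻¹) (ha : π 0 ≤ l - 1)
    (hb : ∀ v ≤ l - 3, π⁻¹ v ≤ l - 1) (hd : ∀ u, 1 ≤ u → u ≤ l - 3 → π u ≤ l - 3)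
    (hB : l - 3 < π 0) :
    (∀ i < k, π i + 1 = sigmaOne k l (i + 1)) ∨ (∀ i < k, π i + 1 = sigmaTwo k l (i + 1)) := by
  have hdesc : π (l - 1) < π (l - 2) := hπ.2.1 ⟨le_rfl, by omega⟩ ⟨by omega, le_rfl⟩ (by omega)
  have hmid : l - 2 ≤ π (l - 2) := by
    by_contra h
    -- otherwise `π` would map the `l - 1` positions `1, …, l - 1` into `[0, l - 3]`
    have := card_le_card_of_injOn π (s := Icc 1 (l - 1)) (t := range (l - 2)) (fun i hi => by
      simp only [coe_Icc, Set.mem_Icc, coe_range, Set.mem_Iio] at hi ⊢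
      rcases (show i ≤ l - 3 ∨ i = l - 2 ∨ i = l - 1 by omega) with h' | rfl | rfl
      · have := hd i hi.1 h'
        omega
      all_goals omega) π.injective.injOn
    simp only [Nat.card_Icc, card_range] at this
    omega
  have hQ : ∀ v ≤ l - 3, 1 ≤ π⁻¹ v ∧ π⁻¹ v ≤ l - 1 ∧ π⁻¹ v ≠ l - 2 := fun v hv => by
    have hv' : π (π⁻¹ v) = v := by simp
    refine ⟨Nat.pos_of_ne_zero fun h => ?_, hb v hv, fun h => ?_⟩ <;> rw [h] at hv' <;> omega
  have hQ0 : π⁻¹ 0 = l - 1 := by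
    have := hπ'.1.add_sub_le le_rfl (Nat.zero_le (l - 3)) le_rfl
    have := hQ 0 (by omega)
    have := hQ (l - 3) le_rfl
    omega
  have hQfirst : ∀ v, 1 ≤ v → v ≤ l - 3 → π⁻¹ v = l - 2 - v := fun v h1 h2 => by
    have hlt := hπ'.1 ⟨le_rfl, Nat.zero_le _⟩ ⟨Nat.zero_le 1, by omega⟩ Nat.one_pos
    have := (hπ'.1.mono (Set.Icc_subset_Icc (Nat.zero_le 1) le_rfl)).apply_eq_of_endpoints
      (a := 1) (b := l - 3) (c := 1) (hQ (l - 3) le_rfl).1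
      (by have := hQ 1 (by omega); omega) ⟨h1, h2⟩
    omega
  have hfirst : ∀ i, 1 ≤ i → i ≤ l - 3 → π i = l - 2 - i := fun i h1 h2 => by
    have hQi : π⁻¹ (l - 2 - i) = i := by
      have := hQfirst (l - 2 - i) (by omega) (by omega)
      omega
    simpa using (congrArg π hQi).symm
  have hlast : π (l - 1) = 0 := by rw [← hQ0]; simp
  have hzero : π 0 = l - 1 := by
    by_contra h
    have hQmid : π⁻¹ (l - 2) = 0 := by rw [show l - 2 = π 0 by omega]; simp
    have := hπ'.2.1 ⟨le_rfl, by omega⟩ ⟨by omega, le_rfl⟩ (by omega : l - 2 < l - 1)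
    omega
  have hne : π (l - 2) ≠ l - 1 := by
    rw [← hzero]
    exact π.injective.ne (by omega)
  rcases (show π (l - 2) = l - 2 ∨ l ≤ π (l - 2) by omega) with hmid | hmid
  · right
    have htail := tail_of_preserves_Iio hk hπk hπ.2.2 fun i hi => by
      rcases (show i = 0 ∨ (1 ≤ i ∧ i ≤ l - 3) ∨ i = l - 2 ∨ i = l - 1 by omega)
        with rfl | h | rfl | rfl
      · omega
      · have := hfirst i h.1 h.2
        omega
      all_goals omega
    intro i hi
    rcases (show i = 0 ∨ (1 ≤ i ∧ i ≤ l - 3) ∨ i = l - 2 ∨ i = l - 1 ∨ l ≤ i by omega)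
      with rfl | h | rfl | rfl | h
      <;> [rw [hzero]; rw [hfirst i h.1 h.2]; rw [hmid]; rw [hlast]; rw [htail i h hi]]
      <;> simp only [sigmaTwo] <;> split_ifs <;> omega
  · left
    obtain ⟨htop, hbot, hmid⟩ := tail_of_preserves_Iio_insert hl hk hπk hπ.2.2 hπ'.2.2
      (by
        rintro i (hi | rfl)
        · rcases Nat.eq_zero_or_pos i with rfl | hi0
          · omega
          · have := hfirst i hi0 (by omega)
            omega
        · omega)
      hmid
    intro i hi
    rcases (show i = 0 ∨ (1 ≤ i ∧ i ≤ l - 3) ∨ i = l - 2 ∨ i = l - 1 ∨ i = k - 1 ∨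
        l ≤ i ∧ i < k - 1 by omega) with rfl | h | rfl | rfl | rfl | h
      <;> [rw [hzero]; rw [hfirst i h.1 h.2]; rw [htop]; rw [hlast]; rw [hbot];
        rw [hmid i h.1 h.2]]
      <;> simp only [sigmaOne] <;> split_ifs <;> omega

theorem sigma_cases_of_natRank (hl : 2 < l) (hk : l < k) (hπk : ∀ n, π n < k ↔ n < k)
    (hπ : AntiOnBlocks k l π) (hπ' : AntiOnBlocks k l ⇑π⁻¹)
    (hr₁ : 1 ≤ natRank π 0 (l - 1)) (hr₂ : l - 2 ≤ natRank π (l - 1) (l - 3))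
    (hr₃ : l - 1 ≤ natRank π (l - 1) (l - 1)) (hr₄ : l - 3 ≤ natRank π (l - 3) (l - 3)) :
    (∀ i < k, π i + 1 = sigmaOne k l (i + 1)) ∨ (∀ i < k, π i + 1 = sigmaTwo k l (i + 1)) ∨
      (∀ i < k, π i + 1 = sigmaThree k l (i + 1)) ∨
      (∀ i < k, π i + 1 = sigmaFour k l (i + 1)) := by
  have ha : π 0 ≤ l - 1 := apply_le_of_lt_natRank (by omega) le_rfl
  have hb : ∀ v ≤ l - 3, π⁻¹ v ≤ l - 1 := fun v hv =>
    apply_le_of_lt_natRank (by rw [natRank_inv]; omega) hv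
  rcases le_or_gt (π 0) (l - 3) with hA | hB
  · have hc : π (l - 1) ≤ l - 1 := by
      by_contra h
      have := hπ.2.1 ⟨le_rfl, by omega⟩ ⟨by omega, le_rfl⟩ (by omega : l - 2 < l - 1)
      have := eq_of_le_natRank hr₃ (u := l - 2) (u' := l - 1) (by omega) le_rfl (by omega)
        (by omega)
      omega
    exact Or.inr (Or.inr (sigmaThree_or_sigmaFour hl hk hπk hπ hπ' hc hA))
  · have hd : ∀ u, 1 ≤ u → u ≤ l - 3 → π u ≤ l - 3 := fun u h1 h2 => by
      by_contra h
      have := eq_of_le_natRank hr₄ (u := 0) (u' := u) (by omega) h2 hB (by omega)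
      omega
    exact (sigmaOne_or_sigmaTwo hl hk hπk hπ hπ' ha hb hd hB).imp_right Or.inl

end Classification

theorem statement13 (k l : ℕ) (hl : 2 < l) (hk : l < k) (σ1 σ : Equiv.Perm (Fin k))
    (hσ1 : ∀ i : Fin k, (σ1 i : ℕ) + 1 =
      if (i : ℕ) + 1 = 1 then l
      else if (i : ℕ) + 1 ≤ l - 2 then l - ((i : ℕ) + 1)
      else if (i : ℕ) + 1 = l - 1 then k
      else if (i : ℕ) + 1 = l then 1
      else if (i : ℕ) + 1 = k then l - 1
      else l + k - ((i : ℕ) + 1))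
    (hle : BruhatLE σ σ1)
    (hD : Dset σ ∪ Dset σ⁻¹ ⊆ ({l - 2, l, k} : Set ℕ)) :
    σ = σ1 ∨
    (∀ i : Fin k, (σ i : ℕ) + 1 =
      if (i : ℕ) + 1 = 1 then l
      else if (i : ℕ) + 1 ≤ l - 2 then l - ((i : ℕ) + 1)
      else if (i : ℕ) + 1 = l - 1 then l - 1
      else if (i : ℕ) + 1 = l then 1
      else k + l + 1 - ((i : ℕ) + 1)) ∨
    (∀ i : Fin k, (σ i : ℕ) + 1 =
      if (i : ℕ) + 1 ≤ l - 2 then l - 1 - ((i : ℕ) + 1)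
      else if (i : ℕ) + 1 = l - 1 then k
      else if (i : ℕ) + 1 = l then l
      else if (i : ℕ) + 1 = k then l - 1
      else k + l - ((i : ℕ) + 1)) ∨
    (∀ i : Fin k, (σ i : ℕ) + 1 =
      if (i : ℕ) + 1 ≤ l - 2 then l - 1 - ((i : ℕ) + 1)
      else if (i : ℕ) + 1 = l - 1 then l
      else if (i : ℕ) + 1 = l then l - 1
      else k + l + 1 - ((i : ℕ) + 1)) := by
  have hπ₁ : ∀ i < k, toNatPerm σ1 i + 1 = sigmaOne k l (i + 1) := fun i hi => by
    rw [toNatPerm_apply_of_lt σ1 hi]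
    exact hσ1 ⟨i, hi⟩
  obtain ⟨hr₁, hr₂, hr₃, hr₄⟩ := natRank_lower_bounds_of_sigmaOne hl hk hπ₁
  have hrank {i j : ℕ} (hi : i < k) (hj : j < k) :=
    natRank_le_of_bruhatLE σ1 hle hi hj
  have hπ := antiOnBlocks_of_Dset_subset σ hk.le (Set.union_subset_iff.mp hD).1
  have hπ' : AntiOnBlocks k l ⇑(toNatPerm σ)⁻¹ := by
    rw [toNatPerm_inv]
    exact antiOnBlocks_of_Dset_subset σ⁻¹ hk.le (Set.union_subset_iff.mp hD).2
  rcases sigma_cases_of_natRank hl hk (toNatPerm_lt_iff σ) hπ hπ'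
      (hr₁.trans (hrank (by omega) (by omega))) (hr₂.trans (hrank (by omega) (by omega)))
      (hr₃.trans (hrank (by omega) (by omega))) (hr₄.trans (hrank (by omega) (by omega)))
    with h | h | h | h
  · refine Or.inl (Equiv.ext fun i => Fin.ext ?_)
    have h₁ : (σ1 i : ℕ) + 1 = sigmaOne k l (i + 1) := hσ1 i
    have := val_apply_add_one_eq σ h i
    omega
  · exact Or.inr (Or.inl (val_apply_add_one_eq σ h))
  · exact Or.inr (Or.inr (Or.inl (val_apply_add_one_eq σ h)))
  · exact Or.inr (Or.inr (Or.inr (val_apply_add_one_eq σ h)))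
end
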